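/- arXiv:1705.01039 — 6 statements merged into one kernel-verified Lean document; each statement's English description precedes it below -/
import Mathlib

section
/- Let F be a field with 0 < char(F) ≤ n. Then the monomial x_1 x_2 ⋯ x_m is not contained in the ideal I_{n,m} of F⟨x_1,…,x_m⟩; in particular d_F(n,m) ≥ m + 1. -/
/-!
Common definitions: the free algebra side (`d_F(n,m)`) and the matrix-invariant side
(`β_F(n,m)`).
-/

/-- The augmentation ideal `F_m⁺` of the free associative algebra `F⟨x_1,…,x_m⟩`:
the two-sided ideal generated by the generators `x_1,…,x_m`. -/
def augIdeal (F : Type) [Field F] (m : ℕ) : TwoSidedIdeal (FreeAlgebra F (Fin m)) :=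
  TwoSidedIdeal.span (Set.range (FreeAlgebra.ι F))

/-- The two-sided ideal `I_{n,m}` of `F⟨x_1,…,x_m⟩` generated by the `n`-th powers of
elements of the augmentation ideal `F_m⁺`. -/
def nilIdeal (F : Type) [Field F] (n m : ℕ) : TwoSidedIdeal (FreeAlgebra F (Fin m)) :=
  TwoSidedIdeal.span {w | ∃ a ∈ augIdeal F m, w = a ^ n}

/-- The set of positive integers `d` such that every product of `d` generators
`x_{i_1} ⋯ x_{i_d}` lies in `I_{n,m}`. -/
def dSet (F : Type) [Field F] (n m : ℕ) : Set ℕ :=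
  {d | 0 < d ∧ ∀ i : Fin d → Fin m,
    (List.ofFn fun t => FreeAlgebra.ι F (i t)).prod ∈ nilIdeal F n m}

/-- `d_F(n,m)`: the minimal positive integer `d` such that all monomials
`x_{i_1} ⋯ x_{i_d}` of length `d` lie in `I_{n,m}`. -/
noncomputable def dF (F : Type) [Field F] (n m : ℕ) : ℕ := sInf (dSet F n m)

private lemma ringHom_image_of_mem_twoSidedSpan {R S : Type*} [Ring R] [CommRing S]
    (f : R →+* S) (J : Ideal S) (s : Set R) (hs : ∀ x ∈ s, f x ∈ J) :
    ∀ x ∈ TwoSidedIdeal.span s, f x ∈ J := by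
  intro x hx
  let I : TwoSidedIdeal R := TwoSidedIdeal.mk' {x | f x ∈ J}
    (by simp)
    (fun {a b} ha hb => by simpa [map_add] using J.add_mem ha hb)
    (fun {a} ha => by simpa [map_neg] using J.neg_mem ha)
    (fun {a b} hb => by simpa [map_mul] using J.mul_mem_left _ hb)
    (fun {a b} ha => by simpa [map_mul] using J.mul_mem_right _ ha)
  have h := TwoSidedIdeal.mem_span_iff.mp hx I
    (fun y hy => by simpa [I, TwoSidedIdeal.mem_mk'] using hs y hy)
  simpa [I, TwoSidedIdeal.mem_mk'] using h

open MvPolynomial in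
private theorem key_not_mem (F : Type) [Field F] (n m : ℕ)
    (hpos : 0 < ringChar F) (hle : ringChar F ≤ n)
    {d : ℕ} (j : Fin d → Fin m) (hj : Function.Injective j) :
    (List.ofFn fun t => FreeAlgebra.ι F (j t)).prod ∉ nilIdeal F n m := by
  classical
  set p := ringChar F with hp_def
  have hp : p.Prime := (CharP.char_is_prime_or_zero F p).resolve_right (by omega)
  haveI : CharP F p := ringChar.charP F
  haveI : CharP (MvPolynomial (Fin m) F) p :=
    charP_of_injective_algebraMap (algebraMap F (MvPolynomial (Fin m) F)).injective p
  haveI : ExpChar (MvPolynomial (Fin m) F) p := ExpChar.prime hp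
  set φ : FreeAlgebra F (Fin m) →ₐ[F] MvPolynomial (Fin m) F :=
    FreeAlgebra.lift F (fun i => (X i : MvPolynomial (Fin m) F)) with hφ_def
  set J : Ideal (MvPolynomial (Fin m) F) :=
    Ideal.span (Set.range fun i : Fin m => (X i : MvPolynomial (Fin m) F) ^ 2) with hJ_def
  set K : Ideal (MvPolynomial (Fin m) F) :=
    Ideal.span (Set.range (X : Fin m → MvPolynomial (Fin m) F)) with hK_def
  -- the image of the augmentation ideal lands in K
  have haug : ∀ a ∈ augIdeal F m, φ a ∈ K := by
    intro a ha
    refine ringHom_image_of_mem_twoSidedSpan φ.toRingHom K _ ?_ a ha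
    rintro x ⟨i, rfl⟩
    have hXi : (X i : MvPolynomial (Fin m) F) ∈
        Set.range (X : Fin m → MvPolynomial (Fin m) F) := ⟨i, rfl⟩
    simpa [φ] using Ideal.subset_span hXi
  -- n-th powers of elements of K land in J
  have hK : ∀ q ∈ K, q ^ n ∈ J := by
    intro q hq
    have hq' : ∃ c : Fin m → MvPolynomial (Fin m) F, ∑ i, c i * X i = q :=
      Ideal.mem_span_range_iff_exists_fun.mp hq
    obtain ⟨c, rfl⟩ := hq'
    have hfrob : (∑ i, c i * X i) ^ p ∈ J := by
      rw [sum_pow_char]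
      refine Ideal.sum_mem _ fun i _ => ?_
      rw [mul_pow]
      have hx : (X i : MvPolynomial (Fin m) F) ^ p = X i ^ 2 * X i ^ (p - 2) := by
        rw [← pow_add]
        congr 1
        have := hp.two_le
        omega
      rw [hx]
      exact Ideal.mul_mem_left _ _ (Ideal.mul_mem_right _ _ (Ideal.subset_span ⟨i, rfl⟩))
    have hn : (∑ i, c i * X i) ^ n = (∑ i, c i * X i) ^ p * (∑ i, c i * X i) ^ (n - p) := by
      rw [← pow_add]
      congr 1
      omega
    rw [hn]
    exact Ideal.mul_mem_right _ _ hfrob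
  -- images of nilIdeal land in J
  have hnil : ∀ x ∈ nilIdeal F n m, φ x ∈ J := by
    refine ringHom_image_of_mem_twoSidedSpan φ.toRingHom J _ ?_
    rintro w ⟨a, ha, rfl⟩
    rw [map_pow]
    exact hK _ (haug a ha)
  -- the exponent vector of the image monomial
  set e : Fin m →₀ ℕ := ∑ t : Fin d, Finsupp.single (j t) 1 with he_def
  have heval : ∀ i, e i = (Finset.univ.filter fun t => j t = i).card := by
    intro i
    rw [he_def, Finsupp.finset_sum_apply]
    simp [Finsupp.single_apply]
  have hcard : ∀ i, (Finset.univ.filter fun t => j t = i).card ≤ 1 := fun i =>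
    Finset.card_le_one.mpr fun a ha b hb =>
      hj ((Finset.mem_filter.mp ha).2.trans (Finset.mem_filter.mp hb).2.symm)
  have he1 : ∀ i, e i ≤ 1 := fun i => (heval i).le.trans (hcard i)
  have hej : ∀ t, e (j t) = 1 := fun t =>
    le_antisymm (he1 _) (by rw [heval]; exact Finset.card_pos.mpr ⟨t, by simp⟩)
  have hsupp : e.support = Finset.univ.image j := by
    ext i
    rw [Finsupp.mem_support_iff, heval]
    simp [Finset.card_eq_zero, Finset.filter_eq_empty_iff]
  -- the image of the monomial
  have hprod : φ ((List.ofFn fun t => FreeAlgebra.ι F (j t)).prod) = monomial e 1 := by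
    rw [map_list_prod, List.map_ofFn, List.prod_ofFn]
    have h1 : ∀ t, φ (FreeAlgebra.ι F (j t)) = X (j t) := fun t => by simp [φ]
    rw [← prod_X_pow_eq_monomial, hsupp, Finset.prod_image (fun a _ b _ h => hj h)]
    refine Finset.prod_congr rfl fun t _ => ?_
    rw [Function.comp_apply, h1, hej, pow_one]
  -- elements of J have vanishing coefficient at e
  have hJcoeff : ∀ x ∈ J, coeff e x = 0 := by
    intro x hx
    have hx' : ∃ c : Fin m → MvPolynomial (Fin m) F, ∑ i, c i * X i ^ 2 = x :=
      Ideal.mem_span_range_iff_exists_fun.mp hx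
    obtain ⟨c, rfl⟩ := hx'
    rw [coeff_sum]
    refine Finset.sum_eq_zero fun i _ => ?_
    rw [X_pow_eq_monomial, coeff_mul_monomial']
    rw [if_neg]
    intro hle2
    have h2 : (2 : ℕ) ≤ e i := by
      simpa [Finsupp.single_apply] using Finsupp.le_def.mp hle2 i
    have := he1 i
    omega
  -- conclude
  intro hmem
  have := hJcoeff _ (hnil _ hmem)
  rw [hprod, coeff_monomial, if_pos rfl] at this
  exact one_ne_zero this

/-- **Remark**: for a field `F` with `0 < char(F) ≤ n`, the monomial `x_1 x_2 ⋯ x_m` is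
not contained in `I_{n,m}`; in particular `d_F(n,m) ≥ m + 1`: every `d` witnessing the
defining property of `d_F(n,m)` satisfies `d ≥ m + 1`. -/
theorem monomial_not_mem_of_small_char (F : Type) [Field F] (n m : ℕ)
    (hn : 0 < n) (hm : 0 < m) (hpos : 0 < ringChar F) (hle : ringChar F ≤ n) :
    (List.ofFn fun i : Fin m => FreeAlgebra.ι F i).prod ∉ nilIdeal F n m ∧
    ∀ d ∈ dSet F n m, m + 1 ≤ d := by
  constructor
  · exact key_not_mem F n m hpos hle (fun i : Fin m => i) Function.injective_id
  · intro d hd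
    by_contra h
    push_neg at h
    have hdm : d ≤ m := by omega
    exact key_not_mem F n m hpos hle (Fin.castLE hdm)
      (Fin.castLE_injective hdm) (hd.2 _)
end

section
/- Let F be a field with char(F) = 0 or char(F) > n. Then the ideal I_{n,m} is spanned as an F-vector space by the elements P_n(w_1,…,w_n), where w_1,…,w_n range over all non-empty monomials in x_1,…,x_m. -/
/-- `w` is a non-empty monomial in the generators `x_1,…,x_m`. -/
def IsMonomialF (F : Type) [Field F] (m : ℕ) (w : FreeAlgebra F (Fin m)) : Prop :=
  ∃ l : List (Fin m), l ≠ [] ∧ w = (l.map (FreeAlgebra.ι F)).prod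

/-!
Let `W` be the `F`-span of the `n`-th powers of elements of `F_m⁺`. Since `n!` is invertible in
`F`, `W` is the span of the complete linearizations of monomials: `P_n(a, …, a) = n! a^n` with
`P_n` multilinear gives one inclusion, and inclusion–exclusion,
`P_n(w) = Σ_{S ⊆ {1,…,n}} (-1)^{n-|S|} (Σ_{i ∈ S} w_i)^n`, the other.

So the point is that `W` is already a two-sided ideal, i.e. `x b^n, b^n x ∈ W` for
`x, b ∈ F_m⁺`. As `0, 1, …, n` are distinct in `F`, a Vandermonde argument shows that `W`
contains every coefficient of a polynomial family of degree `≤ n` in `t` whose values at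
`t = 0, …, n` lie in `W`. Applied to `(b + t c)^n` this puts the directional derivatives
`D(b; c) = Σ_{k<n} b^k c b^{n-1-k}` in `W`, and applied once more to `D(b + t b²; x)` it puts
there the linear coefficient `Σ_{k<n} ((n-1-k) T_k + k T_{k+1})`, where `T_k = b^k x b^{n-k}`.
Together with `D(b; x b) = Σ_{k<n} T_k` and `D(b; b x) = Σ_{k<n} T_{k+1}`, a telescoping
combination gives `n T_0 = n x b^n` and `n T_n = n b^n x`.
-/

open Finset Polynomial
open scoped Nat

section Factorial

variable {F : Type*} [Field F] {n : ℕ}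

lemma natCast_ne_zero_of_factorial_ne_zero (hF : (n ! : F) ≠ 0) {k : ℕ} (hk : 0 < k)
    (hkn : k ≤ n) : (k : F) ≠ 0 := by
  obtain ⟨c, hc⟩ := Nat.dvd_factorial hk hkn
  intro h
  exact hF (by rw [hc, Nat.cast_mul, h, zero_mul])

lemma injOn_natCast_of_factorial_ne_zero (hF : (n ! : F) ≠ 0) :
    Set.InjOn (Nat.cast : ℕ → F) (Set.Iic n) := by
  have key : ∀ i j : ℕ, i < j → j ≤ n → (i : F) ≠ j := fun i j hij hj h =>
    natCast_ne_zero_of_factorial_ne_zero hF (Nat.sub_pos_of_lt hij) ((Nat.sub_le j i).trans hj)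
      (by rw [Nat.cast_sub hij.le, h, sub_self])
  intro i hi j hj h
  rcases lt_trichotomy i j with hij | rfl | hij
  · exact absurd h (key i j hij hj)
  · rfl
  · exact absurd h.symm (key j i hij hi)

lemma factorial_ne_zero_of_ringChar (hchar : ringChar F = 0 ∨ n < ringChar F) :
    (n ! : F) ≠ 0 := by
  rcases hchar with h | h
  · have := ringChar.charP F
    rw [h] at this
    have := CharP.charP_to_charZero F
    exact_mod_cast n.factorial_ne_zero
  · have := ringChar.charP F
    have hp : (ringChar F).Prime :=
      (CharP.char_is_prime_or_zero F (ringChar F)).resolve_right (by omega)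
    rw [Ne, CharP.cast_eq_zero_iff F (ringChar F), hp.dvd_factorial]
    omega

end Factorial

section Extraction

variable {F R : Type*} [Field F] [Ring R] [Algebra F R]

lemma coeff_mem_of_forall_eval_natCast_mem {V : Submodule F R} {p : R[X]} {n : ℕ}
    (hF : (n ! : F) ≠ 0) (hp : p.natDegree ≤ n) (hV : ∀ k ≤ n, p.eval (k : R) ∈ V) (j : ℕ) :
    p.coeff j ∈ V := by
  classical
  -- Under any functional on `R ⧸ V`, `p` becomes a scalar polynomial vanishing at `0, …, n`.
  rw [← Submodule.Quotient.mk_eq_zero, ← Module.forall_dual_apply_eq_zero_iff F]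
  intro f
  set ψ : R →ₗ[F] F := f ∘ₗ V.mkQ
  set q : F[X] := ∑ i ∈ range (n + 1), monomial i (ψ (p.coeff i))
  have hq : ∀ i, q.coeff i = ψ (p.coeff i) := by
    intro i
    simp only [q, finsetSum_coeff, coeff_monomial, sum_ite_eq', mem_range]
    split_ifs with hi
    · rfl
    · rw [coeff_eq_zero_of_natDegree_lt (by omega), map_zero]
  have hqdeg : q.natDegree < n + 1 :=
    Nat.lt_succ_of_le <| natDegree_le_iff_coeff_eq_zero.mpr fun i hi => by
      rw [hq, coeff_eq_zero_of_natDegree_lt (hp.trans_lt hi), map_zero]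
  have hq0 : q = 0 := by
    refine eq_zero_of_natDegree_lt_card_of_eval_eq_zero' q ((range (n + 1)).image Nat.cast)
      ?_ ?_
    · simp only [mem_image, mem_range, forall_exists_index, and_imp, forall_apply_eq_imp_iff₂]
      intro k hk
      have := hV k (by omega)
      rw [← Submodule.Quotient.mk_eq_zero] at this
      calc q.eval (k : F) = ψ (p.eval (k : R)) := by
            rw [eval_eq_sum_range' hqdeg, eval_eq_sum_range' (hp.trans_lt n.lt_succ_self),
              map_sum]
            refine sum_congr rfl fun i _ => ?_
            rw [hq, ← Nat.cast_pow, ← Nat.cast_pow, ← nsmul_eq_mul', ← nsmul_eq_mul', map_nsmul]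
        _ = 0 := by simp [ψ, this]
    · rw [card_image_of_injOn]
      · simpa using hqdeg
      · intro a ha b hb
        exact injOn_natCast_of_factorial_ne_zero hF
          (by simpa [Nat.lt_succ_iff] using ha) (by simpa [Nat.lt_succ_iff] using hb)
  simpa [hq, ψ] using congrArg (coeff · j) hq0

end Extraction

section Spans

variable {F R : Type*} [Field F] [Ring R] [Algebra F R]

lemma Submodule.mul_mem_span_left_of_forall {s : Set R} {a z : R}
    (h : ∀ w ∈ s, a * w ∈ Submodule.span F s) (hz : z ∈ Submodule.span F s) :
    a * z ∈ Submodule.span F s :=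
  Submodule.span_le (p := (Submodule.span F s).comap (LinearMap.mulLeft F a)) |>.mpr h hz

lemma Submodule.mul_mem_span_right_of_forall {s : Set R} {a z : R}
    (h : ∀ w ∈ s, w * a ∈ Submodule.span F s) (hz : z ∈ Submodule.span F s) :
    z * a ∈ Submodule.span F s :=
  Submodule.span_le (p := (Submodule.span F s).comap (LinearMap.mulRight F a)) |>.mpr h hz

lemma Submodule.span_subset_twoSidedIdeal {s : Set R} {I : TwoSidedIdeal R} (h : s ⊆ I) :
    (Submodule.span F s : Set R) ⊆ I :=
  Submodule.span_le (p := I.asIdeal.restrictScalars F) |>.mpr h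

end Spans

theorem MultilinearMap.map_mem_span_image_pi {F ι N : Type*} {M : ι → Type*} [CommSemiring F]
    [Finite ι] [∀ i, AddCommMonoid (M i)] [∀ i, Module F (M i)] [AddCommMonoid N] [Module F N]
    (f : MultilinearMap F M N) {s : ∀ i, Set (M i)} {w : ∀ i, M i}
    (hw : ∀ i, w i ∈ Submodule.span F (s i)) :
    f w ∈ Submodule.span F (f '' Set.univ.pi s) := by
  classical
  have := Fintype.ofFinite ι
  suffices h : ∀ (t : Finset ι) (v : ∀ i, M i), (∀ i, v i ∈ Submodule.span F (s i)) →
      (∀ i ∉ t, v i ∈ s i) → f v ∈ Submodule.span F (f '' Set.univ.pi s) from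
    h univ w hw fun i hi => absurd (mem_univ i) hi
  intro t
  induction t using Finset.induction with
  | empty => exact fun v _ hv => Submodule.subset_span ⟨v, fun i _ => hv i (notMem_empty i), rfl⟩
  | insert j t _ ih =>
    intro v hv hvt
    have hj : s j ⊆ (Submodule.span F (f '' Set.univ.pi s)).comap (f.toLinearMap v j) := by
      intro x hx
      refine ih _ (fun i => ?_) (fun i hi => ?_)
      · rcases eq_or_ne i j with rfl | hij
        · simpa using Submodule.subset_span hx
        · simpa [hij] using hv i
      · rcases eq_or_ne i j with rfl | hij
        · simpa using hx
        · simpa [hij] using hvt i (by simp [hij, hi])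
    simpa using Submodule.span_le.mpr hj (hv j)

section PowDeriv

variable {R : Type*} [Ring R]

/-- The derivative of `a ↦ a ^ N` at `b` in the direction `c`. -/
def powDeriv (b c : R) (N : ℕ) : R :=
  ∑ k ∈ range N, b ^ k * c * b ^ (N - 1 - k)

lemma powDeriv_succ (b c : R) (N : ℕ) :
    powDeriv b c (N + 1) = powDeriv b c N * b + b ^ N * c := by
  rw [powDeriv, sum_range_succ, powDeriv, sum_mul, Nat.add_sub_cancel, Nat.sub_self, pow_zero,
    mul_one]
  congr 1
  refine sum_congr rfl fun k hk => ?_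
  rw [mul_assoc _ _ b, ← pow_succ, show N - 1 - k + 1 = N - k by have := mem_range.mp hk; omega]

lemma map_powDeriv {S : Type*} [Ring S] (f : R →+* S) (b c : R) (N : ℕ) :
    f (powDeriv b c N) = powDeriv (f b) (f c) N := by
  simp only [powDeriv, map_sum, map_mul, map_pow]

lemma powDeriv_mul_self (b : R) (N : ℕ) : powDeriv b (b * b) N = N • b ^ (N + 1) := by
  rw [powDeriv, ← card_range N, ← sum_const, card_range]
  refine sum_congr rfl fun k hk => ?_
  rw [← pow_two, ← pow_add, ← pow_add]
  congr 1
  have := mem_range.mp hk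
  omega

lemma powDeriv_mul_right (b x : R) (N : ℕ) :
    powDeriv b (x * b) N = ∑ k ∈ range N, b ^ k * x * b ^ (N - k) := by
  refine sum_congr rfl fun k hk => ?_
  rw [mul_assoc (b ^ k), mul_assoc (b ^ k), mul_assoc x, ← pow_succ',
    show N - 1 - k + 1 = N - k by have := mem_range.mp hk; omega]

lemma powDeriv_mul_left (b x : R) (N : ℕ) :
    powDeriv b (b * x) N = ∑ k ∈ range N, b ^ (k + 1) * x * b ^ (N - (k + 1)) := by
  refine sum_congr rfl fun k _ => ?_
  rw [← mul_assoc, ← pow_succ, Nat.sub_sub, Nat.add_comm 1 k]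

lemma coeff_zero_pow (p : R[X]) (N : ℕ) : (p ^ N).coeff 0 = p.coeff 0 ^ N :=
  map_pow constantCoeff p N

lemma coeff_one_pow (p : R[X]) (N : ℕ) :
    (p ^ N).coeff 1 = powDeriv (p.coeff 0) (p.coeff 1) N := by
  induction N with
  | zero => simp [powDeriv, coeff_one]
  | succ N ih => rw [pow_succ, mul_coeff_one, ih, coeff_zero_pow, powDeriv_succ, add_comm]

lemma coeff_one_powDeriv_C (p : R[X]) (x : R) (N : ℕ) :
    (powDeriv p (C x) N).coeff 1 = ∑ k ∈ range N,
      (p.coeff 0 ^ k * x * powDeriv (p.coeff 0) (p.coeff 1) (N - 1 - k) +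
        powDeriv (p.coeff 0) (p.coeff 1) k * x * p.coeff 0 ^ (N - 1 - k)) := by
  rw [powDeriv, finsetSum_coeff]
  refine sum_congr rfl fun k _ => ?_
  rw [mul_coeff_one, coeff_mul_C, coeff_mul_C, coeff_zero_pow, coeff_zero_pow,
    coeff_one_pow, coeff_one_pow]

lemma natDegree_powDeriv_le (p q : R[X]) (N : ℕ) :
    (powDeriv p q N).natDegree ≤ (N - 1) * p.natDegree + q.natDegree := by
  refine natDegree_sum_le_of_forall_le _ _ fun k hk => ?_
  have hkN : k + (N - 1 - k) = N - 1 := by have := mem_range.mp hk; omega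
  have h1 : (p ^ k).natDegree ≤ k * p.natDegree := natDegree_pow_le
  have h2 : (p ^ (N - 1 - k)).natDegree ≤ (N - 1 - k) * p.natDegree := natDegree_pow_le
  calc (p ^ k * q * p ^ (N - 1 - k)).natDegree
      ≤ (p ^ k).natDegree + q.natDegree + (p ^ (N - 1 - k)).natDegree :=
        natDegree_mul_le.trans (Nat.add_le_add_right natDegree_mul_le _)
    _ ≤ k * p.natDegree + q.natDegree + (N - 1 - k) * p.natDegree := by omega
    _ = (N - 1) * p.natDegree + q.natDegree := by rw [add_right_comm, ← add_mul, hkN]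

def evalNatCastRingHom (k : ℕ) : R[X] →+* R :=
  eval₂RingHom' (RingHom.id R) k fun a => Nat.commute_cast a k

lemma evalNatCastRingHom_apply (k : ℕ) (p : R[X]) : evalNatCastRingHom k p = p.eval (k : R) :=
  rfl

lemma evalNatCastRingHom_linear (k : ℕ) (b c : R) :
    evalNatCastRingHom k (C c * X + C b) = c * k + b := by
  simp [evalNatCastRingHom_apply]

end PowDeriv

section Telescoping

variable {M : Type*} [AddCommGroup M]

lemma sum_range_telescope_zero (T : ℕ → M) (n : ℕ) :
    ∑ k ∈ range n, ((n - 1 - k) • T k + k • T (k + 1)) + ∑ k ∈ range n, T k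
      - (n - 1) • ∑ k ∈ range n, T (k + 1) = n • T 0 := by
  rw [smul_sum, ← sum_add_distrib, ← sum_sub_distrib]
  calc _ = ∑ k ∈ range n, ((n - k) • T k - (n - (k + 1)) • T (k + 1)) := by
        refine sum_congr rfl fun k hk => ?_
        obtain ⟨r, rfl⟩ := Nat.exists_eq_add_of_lt (mem_range.mp hk)
        rw [show k + r + 1 - 1 - k = r by omega, show k + r + 1 - k = r + 1 by omega,
          show k + r + 1 - (k + 1) = r by omega, show k + r + 1 - 1 = k + r by omega]
        simp only [add_smul, one_smul]
        abel
    _ = n • T 0 := by rw [sum_range_sub', Nat.sub_zero, Nat.sub_self, zero_smul, sub_zero]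

lemma sum_range_telescope_self (T : ℕ → M) (n : ℕ) :
    ∑ k ∈ range n, ((n - 1 - k) • T k + k • T (k + 1)) + ∑ k ∈ range n, T (k + 1)
      - (n - 1) • ∑ k ∈ range n, T k = n • T n := by
  rw [smul_sum, ← sum_add_distrib, ← sum_sub_distrib]
  calc _ = ∑ k ∈ range n, ((k + 1) • T (k + 1) - k • T k) := by
        refine sum_congr rfl fun k hk => ?_
        obtain ⟨r, rfl⟩ := Nat.exists_eq_add_of_lt (mem_range.mp hk)
        rw [show k + r + 1 - 1 - k = r by omega, show k + r + 1 - 1 = k + r by omega]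
        simp only [add_smul, one_smul]
        abel
    _ = n • T n := by
        rw [sum_range_sub (fun k => k • T k), zero_smul, sub_zero]

end Telescoping

section PowSpan

variable (F : Type*) {R : Type*} [Field F] [Ring R] [Algebra F R]

def powSpan (J : TwoSidedIdeal R) (n : ℕ) : Submodule F R :=
  Submodule.span F {z | ∃ a ∈ J, z = a ^ n}

variable {F} {J : TwoSidedIdeal R} {n : ℕ}

lemma pow_mem_powSpan {a : R} (ha : a ∈ J) : a ^ n ∈ powSpan F J n :=
  Submodule.subset_span ⟨a, ha, rfl⟩

lemma powDeriv_mem_powSpan (hF : (n ! : F) ≠ 0) {b c : R} (hb : b ∈ J) (hc : c ∈ J) :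
    powDeriv b c n ∈ powSpan F J n := by
  have hdeg : ((C c * X + C b) ^ n).natDegree ≤ n :=
    natDegree_pow_le.trans <| (Nat.mul_le_mul_left n natDegree_linear_le).trans_eq (mul_one n)
  have h := coeff_mem_of_forall_eval_natCast_mem hF hdeg (fun k _ => by
    rw [← evalNatCastRingHom_apply, map_pow, evalNatCastRingHom_linear]
    exact pow_mem_powSpan (J.add_mem (J.mul_mem_right _ _ hc) hb)) 1
  simpa [coeff_one_pow] using h

/-- The coefficient of `t` in `powDeriv (b + t • (b * b)) x n`. -/
lemma sum_range_nsmul_mem_powSpan (hF : (n ! : F) ≠ 0) {x b : R} (hx : x ∈ J) (hb : b ∈ J) :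
    ∑ k ∈ range n, ((n - 1 - k) • (b ^ k * x * b ^ (n - k)) +
      k • (b ^ (k + 1) * x * b ^ (n - (k + 1)))) ∈ powSpan F J n := by
  have hdeg : (powDeriv (C (b * b) * X + C b) (C x) n).natDegree ≤ n := by
    refine (natDegree_powDeriv_le _ _ n).trans ?_
    rw [natDegree_C, add_zero]
    exact (Nat.mul_le_mul_left _ natDegree_linear_le).trans (by omega)
  have h := coeff_mem_of_forall_eval_natCast_mem hF hdeg (fun k _ => by
    rw [← evalNatCastRingHom_apply, map_powDeriv, evalNatCastRingHom_linear]
    exact powDeriv_mem_powSpan hF (J.add_mem (J.mul_mem_right _ _ (J.mul_mem_left _ _ hb)) hb)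
      (by simpa [evalNatCastRingHom_apply] using hx)) 1
  have h0 : (C (b * b) * X + C b).coeff 0 = b := by simp
  have h1 : (C (b * b) * X + C b).coeff 1 = b * b := by simp
  rw [coeff_one_powDeriv_C, h0, h1] at h
  convert h using 2 with k hk
  have hkn := mem_range.mp hk
  rw [powDeriv_mul_self, powDeriv_mul_self, mul_smul_comm, smul_mul_assoc, smul_mul_assoc,
    show n - 1 - k + 1 = n - k by omega, show n - (k + 1) = n - 1 - k by omega]

lemma mul_pow_mem_powSpan (hF : (n ! : F) ≠ 0) (hn : 0 < n) {x b : R} (hx : x ∈ J)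
    (hb : b ∈ J) : x * b ^ n ∈ powSpan F J n := by
  have hxb := powDeriv_mem_powSpan hF hb (J.mul_mem_right x b hx)
  have hbx := powDeriv_mem_powSpan hF hb (J.mul_mem_left b x hx)
  rw [powDeriv_mul_right] at hxb
  rw [powDeriv_mul_left] at hbx
  have h := sub_mem (add_mem (sum_range_nsmul_mem_powSpan hF hx hb) hxb) (nsmul_mem hbx (n - 1))
  rw [sum_range_telescope_zero (fun k => b ^ k * x * b ^ (n - k)), ← Nat.cast_smul_eq_nsmul F,
    Submodule.smul_mem_iff _ (natCast_ne_zero_of_factorial_ne_zero hF hn le_rfl)] at h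
  simpa using h

lemma pow_mul_mem_powSpan (hF : (n ! : F) ≠ 0) (hn : 0 < n) {x b : R} (hx : x ∈ J)
    (hb : b ∈ J) : b ^ n * x ∈ powSpan F J n := by
  have hxb := powDeriv_mem_powSpan hF hb (J.mul_mem_right x b hx)
  have hbx := powDeriv_mem_powSpan hF hb (J.mul_mem_left b x hx)
  rw [powDeriv_mul_right] at hxb
  rw [powDeriv_mul_left] at hbx
  have h := sub_mem (add_mem (sum_range_nsmul_mem_powSpan hF hx hb) hbx) (nsmul_mem hxb (n - 1))
  rw [sum_range_telescope_self (fun k => b ^ k * x * b ^ (n - k)), ← Nat.cast_smul_eq_nsmul F,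
    Submodule.smul_mem_iff _ (natCast_ne_zero_of_factorial_ne_zero hF hn le_rfl)] at h
  simpa using h

lemma mul_mem_powSpan_left (hF : (n ! : F) ≠ 0) (hn : 0 < n) {x z : R} (hx : x ∈ J)
    (hz : z ∈ powSpan F J n) : x * z ∈ powSpan F J n :=
  Submodule.mul_mem_span_left_of_forall
    (fun _ ⟨_, hb, e⟩ => e ▸ mul_pow_mem_powSpan hF hn hx hb) hz

lemma mul_mem_powSpan_right (hF : (n ! : F) ≠ 0) (hn : 0 < n) {x z : R} (hx : x ∈ J)
    (hz : z ∈ powSpan F J n) : z * x ∈ powSpan F J n :=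
  Submodule.mul_mem_span_right_of_forall
    (fun _ ⟨_, hb, e⟩ => e ▸ pow_mul_mem_powSpan hF hn hx hb) hz

end PowSpan

section Linearization

variable {F R : Type*} [Field F] [Ring R] [Algebra F R] {J : TwoSidedIdeal R} {n : ℕ}

def completeLinearization (w : Fin n → R) : R :=
  ∑ π : Equiv.Perm (Fin n), (List.ofFn fun t => w (π t)).prod

lemma pow_sum_eq_sum_piFinset {ι : Type*} [DecidableEq ι] (w : ι → R) (s : Finset ι) (N : ℕ) :
    (∑ i ∈ s, w i) ^ N =
      ∑ r ∈ Fintype.piFinset fun _ : Fin N => s, (List.ofFn fun t => w (r t)).prod := by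
  have h := (MultilinearMap.mkPiAlgebraFin ℤ N R).map_sum_finset (fun _ i => w i) fun _ => s
  simpa only [MultilinearMap.mkPiAlgebraFin_apply, List.ofFn_const, List.prod_replicate] using h

lemma sum_surjective_eq_completeLinearization (w : Fin n → R) :
    ∑ r ∈ univ.filter (Function.Surjective : (Fin n → Fin n) → Prop),
      (List.ofFn fun t => w (r t)).prod = completeLinearization w := by
  classical
  have : univ.filter (Function.Surjective : (Fin n → Fin n) → Prop) =
      univ.map ⟨_, DFunLike.coe_injective (F := Equiv.Perm (Fin n))⟩ := by
    ext r
    simp only [mem_filter, mem_univ, true_and, mem_map, Function.Embedding.coeFn_mk]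
    exact ⟨fun hr => ⟨Equiv.ofBijective r (Finite.surjective_iff_bijective.mp hr), rfl⟩,
      fun ⟨π, hπ⟩ => hπ ▸ π.surjective⟩
  rw [this, sum_map]
  rfl

lemma completeLinearization_eq_sum_powerset (w : Fin n → R) :
    completeLinearization w =
      ∑ t ∈ (univ : Finset (Fin n)).powerset, (-1 : ℤ) ^ #t • (∑ i ∈ tᶜ, w i) ^ n := by
  classical
  have h := inclusion_exclusion_sum_inf_compl (G := R) univ
    (fun i => univ.filter fun r : Fin n → Fin n => ∀ t, r t ≠ i)
    (fun r => (List.ofFn fun t => w (r t)).prod)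
  have hl : (univ.inf fun i => (univ.filter fun r : Fin n → Fin n => ∀ t, r t ≠ i)ᶜ) =
      univ.filter Function.Surjective := by
    ext r
    simp [Finset.mem_inf, Function.Surjective]
  have hr : ∀ t : Finset (Fin n),
      (t.inf fun i => univ.filter fun r : Fin n → Fin n => ∀ t, r t ≠ i) =
        Fintype.piFinset fun _ => tᶜ := by
    intro t
    ext r
    simp only [Finset.mem_inf, mem_filter, mem_univ, true_and, Fintype.mem_piFinset, mem_compl]
    exact ⟨fun h a ha => h _ ha a rfl, fun h i hi a hai => h a (hai ▸ hi)⟩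
  rw [hl, sum_surjective_eq_completeLinearization] at h
  rw [h]
  simp_rw [hr, ← pow_sum_eq_sum_piFinset]

lemma completeLinearization_const (a : R) :
    completeLinearization (fun _ : Fin n => a) = n ! • a ^ n := by
  simp [completeLinearization, List.ofFn_const, List.prod_replicate, Fintype.card_perm]

lemma completeLinearization_mem_powSpan {w : Fin n → R} (hw : ∀ i, w i ∈ J) :
    completeLinearization w ∈ powSpan F J n := by
  rw [completeLinearization_eq_sum_powerset]
  exact Submodule.sum_mem _ fun t _ => Submodule.smul_of_tower_mem _ _ <|
    pow_mem_powSpan (J.finsetSum_mem _ _ fun i _ => hw i)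

lemma pow_mem_span_completeLinearization (hF : (n ! : F) ≠ 0) {s : Set R} {a : R}
    (ha : a ∈ Submodule.span F s) :
    a ^ n ∈ Submodule.span F
      {z | ∃ w : Fin n → R, (∀ i, w i ∈ s) ∧ z = completeLinearization w} := by
  let P : MultilinearMap F (fun _ : Fin n => R) R :=
    ∑ π : Equiv.Perm (Fin n), (MultilinearMap.mkPiAlgebraFin F n R).domDomCongr π
  have hP : ∀ w, P w = completeLinearization w := fun w => by
    simp [P, completeLinearization]
  have h := P.map_mem_span_image_pi (s := fun _ => s) (w := fun _ => a) fun _ => ha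
  rw [hP, completeLinearization_const, ← Nat.cast_smul_eq_nsmul F,
    Submodule.smul_mem_iff _ hF] at h
  refine Submodule.span_mono ?_ h
  rintro _ ⟨w, hw, rfl⟩
  exact ⟨w, fun i => hw i trivial, hP w⟩

end Linearization

section FreeAlgebra

variable {F X : Type*} [Field F]

lemma FreeAlgebra.mul_mem_of_forall_ι_mul_mem {W : Submodule F (FreeAlgebra F X)}
    (h : ∀ i, ∀ z ∈ W, ι F i * z ∈ W) (r : FreeAlgebra F X) {z : FreeAlgebra F X} (hz : z ∈ W) :
    r * z ∈ W := by
  induction r using FreeAlgebra.induction generalizing z with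
  | grade0 c => rw [← Algebra.smul_def]; exact W.smul_mem c hz
  | grade1 i => exact h i z hz
  | mul a b ha hb => rw [mul_assoc]; exact ha (hb hz)
  | add a b ha hb => rw [add_mul]; exact W.add_mem (ha hz) (hb hz)

lemma FreeAlgebra.mul_mem_of_forall_mul_ι_mem {W : Submodule F (FreeAlgebra F X)}
    (h : ∀ i, ∀ z ∈ W, z * ι F i ∈ W) (r : FreeAlgebra F X) {z : FreeAlgebra F X} (hz : z ∈ W) :
    z * r ∈ W := by
  induction r using FreeAlgebra.induction generalizing z with
  | grade0 c => rw [← Algebra.commutes, ← Algebra.smul_def]; exact W.smul_mem c hz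
  | grade1 i => exact h i z hz
  | mul a b ha hb => rw [← mul_assoc]; exact hb (ha hz)
  | add a b ha hb => rw [mul_add]; exact W.add_mem (ha hz) (hb hz)

lemma FreeAlgebra.twoSidedSpan_subset {s : Set (FreeAlgebra F X)}
    {W : Submodule F (FreeAlgebra F X)} (hs : s ⊆ W) (hl : ∀ i, ∀ z ∈ W, ι F i * z ∈ W)
    (hr : ∀ i, ∀ z ∈ W, z * ι F i ∈ W) :
    (TwoSidedIdeal.span s : Set (FreeAlgebra F X)) ⊆ W := by
  let I : TwoSidedIdeal (FreeAlgebra F X) := .mk' W W.zero_mem W.add_mem W.neg_mem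
    (mul_mem_of_forall_ι_mul_mem hl _) (mul_mem_of_forall_mul_ι_mem hr _)
  intro x hx
  have := (TwoSidedIdeal.span_le (I := I)).mpr (by simpa [I] using hs) hx
  simpa [I] using this

end FreeAlgebra

section FreeAlgebraFin

variable {F : Type} [Field F] {m : ℕ}

lemma IsMonomialF.mem_augIdeal {w : FreeAlgebra F (Fin m)} (hw : IsMonomialF F m w) :
    w ∈ augIdeal F m := by
  obtain ⟨_ | ⟨i, l⟩, hl, rfl⟩ := hw
  · exact absurd rfl hl
  · rw [List.map_cons, List.prod_cons]
    exact TwoSidedIdeal.mul_mem_right _ _ _ (TwoSidedIdeal.subset_span ⟨i, rfl⟩)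

lemma augIdeal_subset_span_monomials :
    (augIdeal F m : Set (FreeAlgebra F (Fin m))) ⊆ Submodule.span F {w | IsMonomialF F m w} := by
  refine FreeAlgebra.twoSidedSpan_subset ?_ (fun i _ => Submodule.mul_mem_span_left_of_forall ?_)
    (fun i _ => Submodule.mul_mem_span_right_of_forall ?_)
  · rintro _ ⟨i, rfl⟩
    exact Submodule.subset_span ⟨[i], List.cons_ne_nil i [], by simp⟩
  · rintro _ ⟨l, _, rfl⟩
    exact Submodule.subset_span ⟨i :: l, List.cons_ne_nil i l, by simp⟩
  · rintro _ ⟨l, _, rfl⟩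
    exact Submodule.subset_span ⟨l ++ [i], by simp, by simp⟩

lemma coe_nilIdeal {n : ℕ} (hF : (n ! : F) ≠ 0) (hn : 0 < n) :
    (nilIdeal F n m : Set (FreeAlgebra F (Fin m))) = powSpan F (augIdeal F m) n := by
  have hι : ∀ i, FreeAlgebra.ι F i ∈ augIdeal F m := fun i => TwoSidedIdeal.subset_span ⟨i, rfl⟩
  refine subset_antisymm ?_ (Submodule.span_subset_twoSidedIdeal TwoSidedIdeal.subset_span)
  refine FreeAlgebra.twoSidedSpan_subset (fun _ hz => Submodule.subset_span hz)
    (fun i _ => mul_mem_powSpan_left hF hn (hι i)) (fun i _ => mul_mem_powSpan_right hF hn (hι i))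

end FreeAlgebraFin

theorem nilIdeal_eq_span_linearizations_general (F : Type) [Field F] (n m : ℕ)
    (hn : 0 < n) (hchar : ringChar F = 0 ∨ n < ringChar F) :
    (nilIdeal F n m : Set (FreeAlgebra F (Fin m))) =
      (Submodule.span F
        {z : FreeAlgebra F (Fin m) | ∃ w : Fin n → FreeAlgebra F (Fin m),
          (∀ i, IsMonomialF F m (w i)) ∧
          z = ∑ π : Equiv.Perm (Fin n), (List.ofFn fun t => w (π t)).prod} :
        Set (FreeAlgebra F (Fin m))) := by
  have hF : (n ! : F) ≠ 0 := factorial_ne_zero_of_ringChar hchar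
  have hset : {z : FreeAlgebra F (Fin m) | ∃ w : Fin n → FreeAlgebra F (Fin m),
      (∀ i, IsMonomialF F m (w i)) ∧
      z = ∑ π : Equiv.Perm (Fin n), (List.ofFn fun t => w (π t)).prod} =
      {z | ∃ w : Fin n → FreeAlgebra F (Fin m), (∀ i, w i ∈ {w | IsMonomialF F m w}) ∧
        z = completeLinearization w} := rfl
  rw [coe_nilIdeal hF hn, hset, SetLike.coe_set_eq]
  refine le_antisymm (Submodule.span_le.mpr ?_) (Submodule.span_le.mpr ?_)
  · rintro _ ⟨a, ha, rfl⟩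
    exact pow_mem_span_completeLinearization hF (augIdeal_subset_span_monomials ha)
  · rintro _ ⟨w, hw, rfl⟩
    exact completeLinearization_mem_powSpan fun i => (hw i).mem_augIdeal

/-- **Lemma**: if `char(F) = 0` or `char(F) > n`, then `I_{n,m}` is spanned as an
`F`-vector space by the complete linearizations
`P_n(w_1,…,w_n) = Σ_{π ∈ S_n} w_{π(1)} ⋯ w_{π(n)}` where `w_1,…,w_n` range over all
non-empty monomials in `x_1,…,x_m`. -/
theorem nilIdeal_eq_span_linearizations (F : Type) [Field F] (n m : ℕ)
    (hn : 0 < n) (hm : 0 < m) (hchar : ringChar F = 0 ∨ n < ringChar F) :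
    (nilIdeal F n m : Set (FreeAlgebra F (Fin m))) =
      (Submodule.span F
        {z : FreeAlgebra F (Fin m) | ∃ w : Fin n → FreeAlgebra F (Fin m),
          (∀ i, IsMonomialF F m (w i)) ∧
          z = ∑ π : Equiv.Perm (Fin n), (List.ofFn fun t => w (π t)).prod} :
        Set (FreeAlgebra F (Fin m))) :=
  nilIdeal_eq_span_linearizations_general F n m hn hchar
end

section
/- Fix a positive integer n. The quotient Z/B is a free ℤ-module, freely generated by the images under the natural surjection Z → Z/B of the monomials [a_1,…,a_k] with k ∈ ℕ and 0 ≤ a_1 < a_2 < ⋯ < a_k ≤ n−1. -/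
/-!
The free non-unital associative ring `Z = ℤ⟨x,y⟩⁺`, realized as the span of the
non-empty monomials inside the free (unital) algebra `W = ℤ⟨x,y⟩`, together with the
`ℤ`-submodule `B` from Section 3 of the paper.
-/

/-- The free unital associative `ℤ`-algebra `W = ℤ⟨x,y⟩` on two generators. -/
abbrev W : Type := FreeAlgebra ℤ (Fin 2)

/-- The generator `x`. -/
noncomputable def Xg : W := FreeAlgebra.ι ℤ (0 : Fin 2)

/-- The generator `y`. -/
noncomputable def Yg : W := FreeAlgebra.ι ℤ (1 : Fin 2)

/-- `w` is a non-empty monomial (word) in `x, y`, i.e. `w ∈ M`. -/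
def IsMonoW (w : W) : Prop :=
  ∃ l : List (Fin 2), l ≠ [] ∧ w = (l.map (FreeAlgebra.ι ℤ)).prod

/-- `Z = ℤ⟨x,y⟩⁺`, the free non-unital associative ring on `x, y`: the `ℤ`-span of the
non-empty monomials inside `W`. -/
noncomputable def Zsub : Submodule ℤ W := Submodule.span ℤ {w | IsMonoW w}

/-- `[a_1,…,a_k] = x^{a_1} y x^{a_2} y ⋯ y x^{a_k}` (for `k = 0` this is `1`). -/
noncomputable def br {k : ℕ} (a : Fin k → ℕ) : W :=
  (List.intersperse Yg (List.ofFn fun i => Xg ^ (a i))).prod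

/-- The `ℤ`-submodule `B` of `Z`: it is generated by the monomials `[a_1,…,a_k]`
(`k ≥ 1`) such that `a_i ≥ n` for some `i`, or `a_i = a_j` for some `i ≠ j`, together
with the elements `[a_1,…,a_k] + [a_1,…,a_k]^{(ij)}` for transpositions `(ij)`,
`i ≠ j`. -/
noncomputable def Bsub (n : ℕ) : Submodule ℤ W :=
  Submodule.span ℤ
    ({w | ∃ (k : ℕ) (a : Fin k → ℕ), 0 < k ∧
        ((∃ i, n ≤ a i) ∨ ∃ i j : Fin k, i ≠ j ∧ a i = a j) ∧ w = br a} ∪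
      {w | ∃ (k : ℕ) (a : Fin k → ℕ) (i j : Fin k), i ≠ j ∧
        w = br a + br (a ∘ Equiv.swap i j)})

/-- The index set of the monomials `[a_1,…,a_k]`, `k ≥ 1`, `0 ≤ a_1 < a_2 < ⋯ < a_k ≤ n−1`
(excluding the degenerate empty word `[0] = x^0`, which does not belong to the
non-unital ring `Z`). -/
def HatIdx (n : ℕ) : Type :=
  {p : Σ k : ℕ, Fin k → ℕ // 0 < p.1 ∧ StrictMono p.2 ∧ (∀ i, p.2 i < n) ∧
    (1 < p.1 ∨ ∃ i, 0 < p.2 i)}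

/-!
Every non-empty monomial is some `[a_1,…,a_k]`. Modulo `B` it vanishes when an exponent is `≥ n`
or repeated, and otherwise equals `sign σ • [a_σ(1),…,a_σ(k)]` with the exponents sorted, so the
increasing monomials span `Z/B`. For their independence, send `[a_1,…,a_k]` to
`e_{a_1} ∧ ⋯ ∧ e_{a_k}` in the exterior algebra of `ℤⁿ`, where `e_a = 0` for `a ≥ n`. This
linear map kills `B` because the wedge product is alternating, and it sends the increasing
monomials to distinct vectors of the standard basis of the exterior algebra. It is built by
letting `x` and `y` act on `ℕ →₀ Λ(ℤⁿ)` as a counter: `x` increments the current exponent `a`,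
and `y` multiplies the accumulated product on the left by `e_a` and resets the counter.
-/

noncomputable section

def brList (L : List ℕ) : W := (List.intersperse Yg (L.map (Xg ^ ·))).prod

lemma br_eq_brList {k : ℕ} (a : Fin k → ℕ) : br a = brList (List.ofFn a) := by
  rw [br, brList, List.map_ofFn]
  rfl

lemma brList_singleton (a : ℕ) : brList [a] = Xg ^ a := by
  simp [brList]

lemma brList_cons_cons (a b : ℕ) (t : List ℕ) :
    brList (a :: b :: t) = Xg ^ a * Yg * brList (b :: t) := by
  simp [brList, List.intersperse_cons_cons, mul_assoc]

lemma Xg_mul_brList (a : ℕ) (t : List ℕ) : Xg * brList (a :: t) = brList ((a + 1) :: t) := by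
  cases t with
  | nil => rw [brList_singleton, brList_singleton, pow_succ']
  | cons b t => rw [brList_cons_cons, brList_cons_cons, pow_succ', mul_assoc, mul_assoc, mul_assoc]

lemma Yg_mul_brList (a : ℕ) (t : List ℕ) : Yg * brList (a :: t) = brList (0 :: a :: t) := by
  rw [brList_cons_cons, pow_zero, one_mul]

lemma exists_brList_eq_word (l : List (Fin 2)) :
    ∃ a t, (l.map (FreeAlgebra.ι ℤ)).prod = brList (a :: t) ∧
      a + t.sum + t.length = l.length := by
  induction l with
  | nil => exact ⟨0, [], by simp [brList_singleton], rfl⟩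
  | cons c l ih =>
    obtain ⟨a, t, hw, hlen⟩ := ih
    rw [List.map_cons, List.prod_cons, hw]
    fin_cases c
    · exact ⟨a + 1, t, Xg_mul_brList a t, by simp only [List.length_cons]; omega⟩
    · exact ⟨0, a :: t, Yg_mul_brList a t, by simp only [List.sum_cons, List.length_cons]; omega⟩

lemma br_sub_sign_smul_mem_Bsub (n : ℕ) {k : ℕ} (σ : Equiv.Perm (Fin k)) (a : Fin k → ℕ) :
    br a - (Equiv.Perm.sign σ : ℤ) • br (a ∘ σ) ∈ Bsub n := by
  induction σ using Equiv.Perm.swap_induction_on generalizing a with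
  | one => simp
  | swap_mul σ i j hij ih =>
    have hswap : br a + br (a ∘ Equiv.swap i j) ∈ Bsub n :=
      Submodule.subset_span (Or.inr ⟨k, a, i, j, hij, rfl⟩)
    have hsign : (Equiv.Perm.sign (Equiv.swap i j * σ) : ℤ) = -Equiv.Perm.sign σ := by
      simp [Equiv.Perm.sign_swap hij]
    convert Submodule.sub_mem _ hswap (ih (a ∘ Equiv.swap i j)) using 1
    rw [hsign, Equiv.Perm.coe_mul, ← Function.comp_assoc]
    module

lemma br_mem_Bsub_sup_span (n : ℕ) {k : ℕ} (hk : 0 < k) (a : Fin k → ℕ)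
    (hne : 1 < k ∨ ∃ i, 0 < a i) :
    br a ∈ Bsub n ⊔ Submodule.span ℤ (Set.range fun p : HatIdx n => br p.1.2) := by
  by_cases hbig : ∃ i, n ≤ a i
  · exact Submodule.mem_sup_left (Submodule.subset_span (Or.inl ⟨k, a, hk, Or.inl hbig, rfl⟩))
  by_cases hinj : Function.Injective a
  swap
  · obtain ⟨i, j, haij, hij⟩ := Function.not_injective_iff.1 hinj
    exact Submodule.mem_sup_left
      (Submodule.subset_span (Or.inl ⟨k, a, hk, Or.inr ⟨i, j, hij, haij⟩, rfl⟩))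
  simp only [not_exists, not_le] at hbig
  set σ := Tuple.sort a
  have hmono : StrictMono (a ∘ σ) :=
    (Tuple.monotone_sort a).strictMono_of_injective (hinj.comp σ.injective)
  have hne' : 1 < k ∨ ∃ i, 0 < (a ∘ σ) i :=
    hne.imp_right fun ⟨i, hi⟩ => ⟨σ⁻¹ i, by simpa using hi⟩
  let p : HatIdx n := ⟨⟨k, a ∘ σ⟩, hk, hmono, fun i => hbig _, hne'⟩
  rw [← sub_add_cancel (br a) ((Equiv.Perm.sign σ : ℤ) • br (a ∘ σ))]
  exact Submodule.add_mem_sup (br_sub_sign_smul_mem_Bsub n σ a)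
    (Submodule.smul_mem _ _ (Submodule.subset_span ⟨p, rfl⟩))

lemma Zsub_le_Bsub_sup_span (n : ℕ) :
    Zsub ≤ Bsub n ⊔ Submodule.span ℤ (Set.range fun p : HatIdx n => br p.1.2) := by
  rw [Zsub, Submodule.span_le]
  rintro w ⟨l, hl, rfl⟩
  obtain ⟨a, t, hw, hlen⟩ := exists_brList_eq_word l
  rw [SetLike.mem_coe, hw, ← List.ofFn_get (a :: t), ← br_eq_brList]
  refine br_mem_Bsub_sup_span n (List.length_pos_of_ne_nil (List.cons_ne_nil a t)) _ ?_
  cases t with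
  | nil =>
    simp only [List.sum_nil, List.length_nil, add_zero] at hlen
    exact Or.inr ⟨0, hlen ▸ List.length_pos_iff.2 hl⟩
  | cons b t => exact Or.inl (by simp)

section ReadWord

variable {A : Type*} [Ring A] (f : ℕ → A)

def wordAction : W →ₐ[ℤ] Module.End ℤ (ℕ →₀ A) :=
  FreeAlgebra.lift ℤ ![Finsupp.lmapDomain A ℤ Nat.succ,
    Finsupp.lsum ℤ fun c => Finsupp.lsingle 0 ∘ₗ LinearMap.mulLeft ℤ (f c)]

lemma wordAction_Xg (c : ℕ) (u : A) :
    wordAction f Xg (Finsupp.single c u) = Finsupp.single (c + 1) u := by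
  simp [wordAction, Xg, Finsupp.mapDomain_single]

lemma wordAction_Xg_pow (a c : ℕ) (u : A) :
    wordAction f (Xg ^ a) (Finsupp.single c u) = Finsupp.single (c + a) u := by
  induction a with
  | zero => simp
  | succ a ih => rw [pow_succ', map_mul, Module.End.mul_apply, ih, wordAction_Xg, add_assoc]

lemma wordAction_Yg (c : ℕ) (u : A) :
    wordAction f Yg (Finsupp.single c u) = Finsupp.single 0 (f c * u) := by
  simp [wordAction, Yg]

lemma wordAction_brList_cons (a : ℕ) (t : List ℕ) :
    wordAction f (brList (a :: t)) (Finsupp.single 0 1) = Finsupp.single a (t.map f).prod := by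
  induction t generalizing a with
  | nil => rw [brList_singleton, wordAction_Xg_pow, zero_add, List.map_nil, List.prod_nil]
  | cons b t ih =>
    rw [brList_cons_cons, map_mul, map_mul, Module.End.mul_apply, Module.End.mul_apply, ih,
      wordAction_Yg, wordAction_Xg_pow, zero_add, List.map_cons, List.prod_cons]

def readWord : W →ₗ[ℤ] A :=
  Finsupp.lsum ℤ (fun c => LinearMap.mulLeft ℤ (f c)) ∘ₗ
    LinearMap.applyₗ (Finsupp.single 0 1) ∘ₗ (wordAction f).toLinearMap

lemma readWord_apply (w : W) :
    readWord f w = Finsupp.lsum ℤ (fun c => LinearMap.mulLeft ℤ (f c))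
      (wordAction f w (Finsupp.single 0 1)) :=
  rfl

lemma readWord_brList_cons (a : ℕ) (t : List ℕ) :
    readWord f (brList (a :: t)) = ((a :: t).map f).prod := by
  rw [readWord_apply, wordAction_brList_cons, Finsupp.lsum_single, LinearMap.mulLeft_apply,
    List.map_cons, List.prod_cons]

lemma readWord_br {k : ℕ} (hk : 0 < k) (a : Fin k → ℕ) :
    readWord f (br a) = (List.ofFn (f ∘ a)).prod := by
  obtain ⟨k, rfl⟩ := Nat.exists_eq_add_of_lt hk
  rw [br_eq_brList, List.ofFn_succ, readWord_brList_cons, ← List.ofFn_succ, List.map_ofFn]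

end ReadWord

def truncVec (n a : ℕ) : Fin n → ℤ := if h : a < n then Pi.single ⟨a, h⟩ 1 else 0

def extMap (n : ℕ) : W →ₗ[ℤ] ExteriorAlgebra ℤ (Fin n → ℤ) :=
  readWord fun a => ExteriorAlgebra.ι ℤ (truncVec n a)

lemma extMap_br (n : ℕ) {k : ℕ} (hk : 0 < k) (a : Fin k → ℕ) :
    extMap n (br a) = ExteriorAlgebra.ιMulti ℤ k (truncVec n ∘ a) := by
  rw [extMap, readWord_br _ hk, ExteriorAlgebra.ιMulti_apply]
  rfl

lemma Bsub_le_ker_extMap (n : ℕ) : Bsub n ≤ LinearMap.ker (extMap n) := by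
  rw [Bsub, Submodule.span_le]
  rintro w (⟨k, a, hk, ⟨i, hi⟩ | ⟨i, j, hij, haij⟩, rfl⟩ | ⟨k, a, i, j, hij, rfl⟩)
  · rw [SetLike.mem_coe, LinearMap.mem_ker, extMap_br n hk]
    exact AlternatingMap.map_coord_zero _ i (by simp [truncVec, hi.not_gt])
  · rw [SetLike.mem_coe, LinearMap.mem_ker, extMap_br n hk]
    exact AlternatingMap.map_eq_zero_of_eq _ _ (by simp [haij]) hij
  · have hk : 0 < k := i.pos
    rw [SetLike.mem_coe, LinearMap.mem_ker, map_add, extMap_br n hk, extMap_br n hk,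
      ← Function.comp_assoc, AlternatingMap.map_swap _ _ hij, add_neg_cancel]

def extBasis (n : ℕ) :
    Module.Basis (Σ k, Set.powersetCard (Fin n) k) ℤ (ExteriorAlgebra ℤ (Fin n → ℤ)) :=
  (DirectSum.Decomposition.isInternal fun k : ℕ => ⋀[ℤ]^k (Fin n → ℤ)).collectedBasis
    fun k => (Pi.basisFun ℤ (Fin n)).exteriorPower k

def hatIndex {n : ℕ} (p : HatIdx n) : Σ k, Set.powersetCard (Fin n) k :=
  ⟨p.1.1, Set.powersetCard.ofFinEmbEquiv
    (OrderEmbedding.ofStrictMono (fun i => ⟨p.1.2 i, p.2.2.2.1 i⟩) fun _ _ h => p.2.2.1 h)⟩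

lemma hatIndex_injective (n : ℕ) : Function.Injective (hatIndex (n := n)) := by
  rintro ⟨⟨k, a⟩, hp⟩ ⟨⟨k', a'⟩, hq⟩ h
  obtain ⟨rfl, h⟩ := Sigma.mk.inj_iff.1 h
  have h : a = a' := funext fun i =>
    congrArg (fun f : Fin k ↪o Fin n => (f i : ℕ))
      (Set.powersetCard.ofFinEmbEquiv.injective (eq_of_heq h))
  subst h
  rfl

lemma extMap_br_hat {n : ℕ} (p : HatIdx n) : extMap n (br p.1.2) = extBasis n (hatIndex p) := by
  rw [extMap_br n p.2.1, extBasis, DirectSum.IsInternal.collectedBasis_coe]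
  dsimp only [hatIndex]
  rw [exteriorPower.basis_apply, exteriorPower.ιMulti_family, Equiv.symm_apply_apply,
    exteriorPower.ιMulti_apply_coe]
  congr 1
  funext i
  simp only [Function.comp_apply, truncVec, p.2.2.2.1 i, dif_pos, Pi.basisFun_apply]
  rfl

lemma linearIndependent_mk_br_hat (n : ℕ) :
    LinearIndependent ℤ
      (fun p : HatIdx n => (Submodule.Quotient.mk (br p.1.2) : W ⧸ Bsub n)) := by
  refine LinearIndependent.of_comp ((Bsub n).liftQ (extMap n) (Bsub_le_ker_extMap n)) ?_
  have hcomp : (Bsub n).liftQ (extMap n) (Bsub_le_ker_extMap n) ∘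
      (fun p : HatIdx n => (Submodule.Quotient.mk (br p.1.2) : W ⧸ Bsub n)) =
      extBasis n ∘ hatIndex :=
    funext extMap_br_hat
  rw [hcomp]
  exact (extBasis n).linearIndependent.comp _ (hatIndex_injective n)

end

theorem Z_mod_B_free_general (n : ℕ) :
    Zsub ≤ Bsub n ⊔ Submodule.span ℤ (Set.range fun p : HatIdx n => br p.1.2) ∧
    LinearIndependent ℤ
      (fun p : HatIdx n => (Submodule.Quotient.mk (br p.1.2) : W ⧸ Bsub n)) :=
  ⟨Zsub_le_Bsub_sup_span n, linearIndependent_mk_br_hat n⟩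

/-- **Lemma 2 (v)**: `Z/B` is a free `ℤ`-module freely generated by the images of the
monomials `[a_1,…,a_k]` with `0 ≤ a_1 < a_2 < ⋯ < a_k ≤ n−1`: these images span `Z/B`
(i.e. `Z ≤ B ⊔ span ŵ`), and they are `ℤ`-linearly independent modulo `B`. -/
theorem Z_mod_B_free (n : ℕ) (hn : 0 < n) :
    Zsub ≤ Bsub n ⊔ Submodule.span ℤ (Set.range fun p : HatIdx n => br p.1.2) ∧
    LinearIndependent ℤ
      (fun p : HatIdx n => (Submodule.Quotient.mk (br p.1.2) : W ⧸ Bsub n)) :=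
  Z_mod_B_free_general n
end

section
/- Fix a positive integer n. For every positive integer a, the ℤ-submodule B of Z is preserved by the ℤ-linear derivation δ_a on Z determined by δ_a(x) = x^a and δ_a(y) = 0. -/
namespace BPres

def bump (d : ℕ) {k : ℕ} (t : Fin k → ℕ) (i : Fin k) : Fin k → ℕ :=
  Function.update t i (t i - 1 + d)

lemma br_one (t : Fin 1 → ℕ) : br t = Xg ^ t 0 := by
  simp [br]

lemma br_succ {k : ℕ} (t : Fin (k + 2) → ℕ) :
    br t = Xg ^ t 0 * (Yg * br (fun i : Fin (k + 1) => t i.succ)) := by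
  simp [br, List.ofFn_succ, mul_assoc]

section
variable (d : ℕ) (δ : W →ₗ[ℤ] W) (hder : ∀ u v : W, δ (u * v) = δ u * v + u * δ v)
  (hx : δ Xg = Xg ^ d)

include hder in
lemma delta_one : δ 1 = 0 := by simpa using hder 1 1

include hder hx in
lemma delta_pow (m : ℕ) : δ (Xg ^ m) = (m : ℤ) • Xg ^ (m - 1 + d) := by
  induction m with
  | zero => simp [delta_one δ hder]
  | succ m ih =>
      rw [pow_succ, hder, ih, hx]
      rcases Nat.eq_zero_or_pos m with hm | hm
      · subst hm; simp
      · have h1 : m - 1 + d + 1 = m + d := by omega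
        have h2 : m + 1 - 1 + d = m + d := by omega
        rw [smul_mul_assoc, ← pow_succ, h1, h2, ← pow_add, Nat.cast_add, Nat.cast_one,
          add_smul, one_smul]
end

section
variable (d : ℕ) (δ : W →ₗ[ℤ] W) (hder : ∀ u v : W, δ (u * v) = δ u * v + u * δ v)
  (hx : δ Xg = Xg ^ d) (hy : δ Yg = 0)

lemma bump_zero_tail {k : ℕ} (t : Fin (k + 2) → ℕ) :
    (fun i : Fin (k + 1) => bump d t 0 i.succ) = fun i => t i.succ := by
  funext j
  simp [bump, Function.update_apply, Fin.succ_ne_zero]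

lemma bump_succ_head {k : ℕ} (t : Fin (k + 2) → ℕ) (i : Fin (k + 1)) :
    bump d t i.succ 0 = t 0 := by
  simp [bump, Function.update_apply, (Fin.succ_ne_zero i).symm]

lemma bump_succ_tail {k : ℕ} (t : Fin (k + 2) → ℕ) (i : Fin (k + 1)) :
    (fun j : Fin (k + 1) => bump d t i.succ j.succ) = bump d (fun j => t j.succ) i := by
  funext j
  simp only [bump, Function.update_apply, Fin.succ_inj]

include hder hx hy in
lemma delta_br : ∀ (k : ℕ) (t : Fin (k + 1) → ℕ),
    δ (br t) = ∑ i, (t i : ℤ) • br (bump d t i) := by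
  intro k
  induction k with
  | zero =>
      intro t
      rw [br_one, delta_pow d δ hder hx]
      rw [Finset.sum_eq_single 0 (by simp [Subsingleton.elim _ (0 : Fin 1)])
        (by simp), br_one]
      simp [bump]
  | succ k ih =>
      intro t
      rw [br_succ, hder, hder, hy, delta_pow d δ hder hx,
        Fin.sum_univ_succ (f := fun i => (t i : ℤ) • br (bump d t i)), ih]
      congr 1
      · rw [smul_mul_assoc]
        congr 1
        rw [show br (bump d t 0) = Xg ^ (bump d t 0 0) *
            (Yg * br (fun i : Fin (k+1) => bump d t 0 i.succ)) from br_succ _,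
          bump_zero_tail]
        congr 2
      · rw [zero_mul, zero_add, Finset.mul_sum, Finset.mul_sum]
        refine Finset.sum_congr rfl fun i _ => ?_
        rw [mul_smul_comm, mul_smul_comm]
        congr 1
        rw [show br (bump d t i.succ) = Xg ^ (bump d t i.succ 0) *
            (Yg * br (fun j : Fin (k+1) => bump d t i.succ j.succ)) from br_succ _,
          bump_succ_head, bump_succ_tail]
end

lemma bump_swap_eq (d : ℕ) {k : ℕ} (t : Fin k → ℕ) {i j : Fin k} (hij : i ≠ j)
    (h : t i = t j) : bump d t j = bump d t i ∘ Equiv.swap i j := by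
  funext x
  simp only [bump, Function.comp_apply, Function.update_apply, Equiv.swap_apply_def]
  split_ifs with h1 h2 h3 h4 h5 <;> simp_all

lemma bump_comp_swap (d : ℕ) {k : ℕ} (t : Fin k → ℕ) (i j m : Fin k) :
    bump d (t ∘ Equiv.swap i j) m = bump d t (Equiv.swap i j m) ∘ Equiv.swap i j := by
  funext x
  simp only [bump, Function.comp_apply, Function.update_apply,
    Equiv.apply_eq_iff_eq (Equiv.swap i j)]


end BPres

open BPres

/-- **Lemma 2 (iv)**: for any positive integer `a`, the submodule `B` is preserved by
the (unique) `ℤ`-linear derivation `δ_a` on `Z` with `δ_a(x) = x^a` and `δ_a(y) = 0`. -/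
theorem B_preserved_by_derivation (n : ℕ) (hn : 0 < n) (a : ℕ) (ha : 0 < a)
    (δ : W →ₗ[ℤ] W) (hder : ∀ u v : W, δ (u * v) = δ u * v + u * δ v)
    (hx : δ Xg = Xg ^ a) (hy : δ Yg = 0) :
    ∀ w ∈ Bsub n, δ w ∈ Bsub n := by
  intro w hw
  induction hw using Submodule.span_induction with
  | zero => simp
  | add u v _ _ ihu ihv => rw [map_add]; exact Submodule.add_mem _ ihu ihv
  | smul r u _ ihu => rw [map_smul]; exact Submodule.smul_mem _ _ ihu
  | mem w hw =>
      rcases hw with hw | hw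
      · obtain ⟨k, t, hk, hcond, rfl⟩ := hw
        obtain ⟨k, rfl⟩ : ∃ k', k = k' + 1 := ⟨k - 1, by omega⟩
        rw [delta_br a δ hder hx hy]
        rcases hcond with ⟨i, hi⟩ | ⟨i, j, hij, hrep⟩
        · refine Submodule.sum_mem _ fun m _ => Submodule.smul_mem _ _ ?_
          refine Submodule.subset_span
            (Or.inl ⟨k + 1, bump a t m, k.succ_pos, Or.inl ⟨i, ?_⟩, rfl⟩)
          simp only [bump, Function.update_apply]
          split_ifs with h
          · rw [h] at hi; omega
          · exact hi
        · classical
          set f : Fin (k + 1) → W := fun m => (t m : ℤ) • br (bump a t m) with hf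
          rw [← Finset.add_sum_erase _ f (Finset.mem_univ i),
            ← Finset.add_sum_erase _ f
              (Finset.mem_erase.2 ⟨hij.symm, Finset.mem_univ j⟩),
            ← add_assoc]
          refine Submodule.add_mem _ ?_ (Submodule.sum_mem _ fun m hm => ?_)
          · have hfe : f i + f j =
                (t i : ℤ) • (br (bump a t i) + br (bump a t i ∘ Equiv.swap i j)) := by
              rw [hf]
              simp only
              rw [← bump_swap_eq a t hij hrep, smul_add, hrep]
            rw [hfe]
            exact Submodule.smul_mem _ _ (Submodule.subset_span
              (Or.inr ⟨k + 1, bump a t i, i, j, hij, rfl⟩))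
          · simp only [Finset.mem_erase] at hm
            refine Submodule.smul_mem _ _ (Submodule.subset_span
              (Or.inl ⟨k + 1, bump a t m, k.succ_pos, Or.inr ⟨i, j, hij, ?_⟩, rfl⟩))
            simp only [bump, Function.update_apply]
            rw [if_neg (fun h => hm.2.1 h.symm), if_neg (fun h => hm.1 h.symm)]
            exact hrep
      · obtain ⟨k, t, i, j, hij, rfl⟩ := hw
        obtain ⟨k, rfl⟩ : ∃ k', k = k' + 1 := ⟨k - 1, by have := i.pos; omega⟩
        rw [map_add, delta_br a δ hder hx hy, delta_br a δ hder hx hy]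
        have key : ∑ m, ((t ∘ Equiv.swap i j) m : ℤ) • br (bump a (t ∘ Equiv.swap i j) m)
            = ∑ m, (t m : ℤ) • br (bump a t m ∘ Equiv.swap i j) := by
          rw [← Equiv.sum_comp (Equiv.swap i j)
            (fun m => (t m : ℤ) • br (bump a t m ∘ Equiv.swap i j))]
          exact Finset.sum_congr rfl fun m _ => by
            rw [Function.comp_apply, bump_comp_swap]
        rw [key, ← Finset.sum_add_distrib]
        refine Submodule.sum_mem _ fun m _ => ?_
        rw [← smul_add]
        exact Submodule.smul_mem _ _ (Submodule.subset_span
          (Or.inr ⟨k + 1, bump a t m, i, j, hij, rfl⟩))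
end

section
/- Fix a positive integer n. Let k be a positive integer, a_1 ≤ a_2 ≤ ⋯ ≤ a_k nonnegative integers, and r a nonnegative integer with a_1 + k + r > n. Then Σ_{c_1+⋯+c_k = r} Σ_{π ∈ S_k} [a_1 + c_{π(1)}, …, a_k + c_{π(k)}] ∈ B, where the outer sum is over all k-tuples (c_1,…,c_k) of nonnegative integers summing to r. -/
/-!
Write `b = a + c` and work modulo `B`, where `[b]` changes sign under a transposition and
vanishes when two entries agree or an entry is `≥ n`. Call `i` swappable if `a (i+1) ≤ b i`;
swapping `b i` and `b (i+1)` at the first swappable `i` keeps `b ≥ a` (as `a` is monotone) and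
keeps `i` the first swappable position, so it is an involution on the tuples `c` with
`∑ c = r` that reverses the sign of `[a + c]`. A tuple with no swappable position has
`b i + 1 ≤ a (i+1)` for all `i < k`, so summing gives `b k ≥ a 1 + (k - 1) + r ≥ n` and
`[b] ∈ B`. Finally the sum over permutations is a reindexing of the sum over `c`.
-/

open Finset Equiv

section FirstSwap

variable {m : ℕ}

def swappable (a b : Fin (m + 1) → ℕ) : Finset (Fin m) :=
  {i | a i.succ ≤ b i.castSucc}

def firstSwap (a b : Fin (m + 1) → ℕ) : Perm (Fin (m + 1)) :=
  if h : (swappable a b).Nonempty then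
    swap ((swappable a b).min' h).castSucc ((swappable a b).min' h).succ
  else 1

variable {a b : Fin (m + 1) → ℕ}

lemma firstSwap_of_forall_lt (h : ∀ i : Fin m, b i.castSucc < a i.succ) : firstSwap a b = 1 :=
  dif_neg fun ⟨i, hi⟩ => (h i).not_ge (by simpa [swappable] using hi)

lemma exists_firstSwap_eq_swap (h : ¬ ∀ i : Fin m, b i.castSucc < a i.succ) :
    ∃ i : Fin m, a i.succ ≤ b i.castSucc ∧ (∀ j < i, b j.castSucc < a j.succ) ∧
      firstSwap a b = swap i.castSucc i.succ := by
  obtain ⟨i, hi⟩ := not_forall.1 h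
  have hne : (swappable a b).Nonempty := ⟨i, by simpa [swappable] using hi⟩
  refine ⟨_, by simpa [swappable] using min'_mem _ hne, fun j hj => ?_, dif_pos hne⟩
  by_contra! hle
  exact hj.not_ge (min'_le _ _ (by simpa [swappable] using hle))

lemma firstSwap_mul_self (a b : Fin (m + 1) → ℕ) : firstSwap a b * firstSwap a b = 1 := by
  unfold firstSwap
  split_ifs <;> simp

lemma le_comp_firstSwap (ha : Monotone a) (hab : a ≤ b) : a ≤ b ∘ firstSwap a b := by
  by_cases h : ∀ i : Fin m, b i.castSucc < a i.succ
  · simpa [firstSwap_of_forall_lt h] using hab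
  obtain ⟨i, hi, -, hσ⟩ := exists_firstSwap_eq_swap h
  intro s
  rw [hσ]
  rcases eq_or_ne s i.castSucc with rfl | hs₁
  · simpa using (ha i.castSucc_lt_succ.le).trans (hab i.succ)
  rcases eq_or_ne s i.succ with rfl | hs₂
  · simpa using hi
  · simpa [swap_apply_of_ne_of_ne hs₁ hs₂] using hab s

lemma firstSwap_comp_firstSwap (hab : a ≤ b) :
    firstSwap a (b ∘ firstSwap a b) = firstSwap a b := by
  by_cases h : ∀ i : Fin m, b i.castSucc < a i.succ
  · simp [firstSwap_of_forall_lt h]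
  obtain ⟨i, -, hmin_b, hσ⟩ := exists_firstSwap_eq_swap h
  have hmem : i ∈ swappable a (b ∘ swap i.castSucc i.succ) := by simpa [swappable] using hab i.succ
  -- the swap only changes `b` at `i` and `i + 1`, so it creates no swappable position below `i`
  have hmin : ∀ j ∈ swappable a (b ∘ swap i.castSucc i.succ), i ≤ j := by
    intro j hj
    by_contra! hji
    have hj₁ : j.castSucc ≠ i.castSucc := by simpa using hji.ne
    have hj₂ : j.castSucc ≠ i.succ := (Fin.castSucc_lt_succ_iff.2 hji.le).ne
    refine (hmin_b j hji).not_ge ?_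
    simpa [swappable, swap_apply_of_ne_of_ne hj₁ hj₂] using hj
  have hne : (swappable a (b ∘ swap i.castSucc i.succ)).Nonempty := ⟨i, hmem⟩
  rw [hσ, firstSwap, dif_pos hne, (min'_eq_iff _ _ _).2 ⟨hmem, hmin⟩]

lemma add_le_last_of_forall_lt {r : ℕ} (h : ∀ i : Fin m, b i.castSucc < a i.succ)
    (hsum : ∑ i, a i + r ≤ ∑ i, b i) : a 0 + m + r ≤ b (Fin.last m) := by
  have hstep : ∑ i : Fin m, b i.castSucc + m ≤ ∑ i : Fin m, a i.succ := by
    simpa [sum_add_distrib] using sum_le_sum fun i (_ : i ∈ univ) => Nat.succ_le_of_lt (h i)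
  rw [Fin.sum_univ_succ, Fin.sum_univ_castSucc] at hsum
  omega

end FirstSwap

theorem sum_antidiagonalTuple_eq_zero {G : Type*} [AddCommGroup G] {n m r : ℕ}
    (f : (Fin (m + 1) → ℕ) → G)
    (hswap : ∀ b (i : Fin m), f b + f (b ∘ swap i.castSucc i.succ) = 0)
    (hrep : ∀ b (i : Fin m), b i.castSucc = b i.succ → f b = 0)
    (hbig : ∀ b, n ≤ b (Fin.last m) → f b = 0)
    {a : Fin (m + 1) → ℕ} (ha : Monotone a) (h : n ≤ a 0 + m + r) :
    ∑ c ∈ Nat.antidiagonalTuple (m + 1) r, f (a + c) = 0 := by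
  set σ : (Fin (m + 1) → ℕ) → Perm (Fin (m + 1)) := fun c => firstSwap a (a + c)
  set g : (Fin (m + 1) → ℕ) → Fin (m + 1) → ℕ := fun c => (a + c) ∘ σ c - a
  have hg : ∀ c, a + g c = (a + c) ∘ σ c := fun c =>
    add_tsub_cancel_of_le (le_comp_firstSwap ha le_self_add)
  have hσg : ∀ c, σ (g c) = σ c := fun c => by
    simp only [σ, hg]
    exact firstSwap_comp_firstSwap le_self_add
  have hvanish : ∀ c ∈ Nat.antidiagonalTuple (m + 1) r,
      (∀ i : Fin m, (a + c) i.castSucc < a i.succ) → f (a + c) = 0 := by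
    intro c hc hlt
    refine hbig _ (h.trans (add_le_last_of_forall_lt hlt ?_))
    rw [Nat.mem_antidiagonalTuple] at hc
    simp [sum_add_distrib, hc]
  have hfix : ∀ c, (∀ i : Fin m, (a + c) i.castSucc < a i.succ) → g c = c := fun c hlt => by
    simp [g, σ, firstSwap_of_forall_lt hlt]
  refine sum_involution (fun c _ => g c) (fun c hc => ?_) (fun c hc hfc => ?_) (fun c hc => ?_)
    (fun c _ => ?_)
  · by_cases hlt : ∀ i : Fin m, (a + c) i.castSucc < a i.succ
    · simp [hfix c hlt, hvanish c hc hlt]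
    obtain ⟨i, -, -, hσ⟩ := exists_firstSwap_eq_swap hlt
    simpa [hg, σ, hσ] using hswap (a + c) i
  · by_cases hlt : ∀ i : Fin m, (a + c) i.castSucc < a i.succ
    · exact absurd (hvanish c hc hlt) hfc
    obtain ⟨i, -, -, hσ⟩ := exists_firstSwap_eq_swap hlt
    intro hgc
    refine hfc (hrep _ i ?_)
    simpa [σ, hσ, hgc] using congrFun (hg c) i.castSucc
  · rw [Nat.mem_antidiagonalTuple] at hc ⊢
    have := congrArg (fun b => ∑ i, b i) (hg c)
    simp only [Pi.add_apply, sum_add_distrib, Function.comp_apply, Equiv.sum_comp] at this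
    omega
  · change (a + g c) ∘ σ (g c) - a = c
    rw [hg, hσg, Function.comp_assoc, ← Perm.coe_mul, firstSwap_mul_self, Perm.coe_one,
      Function.comp_id, add_tsub_cancel_left]

lemma sum_antidiagonalTuple_comp_perm {M : Type*} [AddCommMonoid M] {k r : ℕ}
    (π : Perm (Fin k)) (f : (Fin k → ℕ) → M) :
    ∑ c ∈ Nat.antidiagonalTuple k r, f (c ∘ π) = ∑ c ∈ Nat.antidiagonalTuple k r, f c :=
  sum_equiv (π.symm.arrowCongr (Equiv.refl ℕ))
    (fun c => by simp [Nat.mem_antidiagonalTuple, Equiv.sum_comp]) (fun c _ => rfl)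

section Bsub

variable {n k : ℕ} {a : Fin k → ℕ}

lemma br_mem_Bsub_of_le {i : Fin k} (hi : n ≤ a i) : br a ∈ Bsub n :=
  Submodule.subset_span (.inl ⟨k, a, i.pos, .inl ⟨i, hi⟩, rfl⟩)

lemma br_mem_Bsub_of_eq {i j : Fin k} (hij : i ≠ j) (h : a i = a j) : br a ∈ Bsub n :=
  Submodule.subset_span (.inl ⟨k, a, i.pos, .inr ⟨i, j, hij, h⟩, rfl⟩)

lemma br_add_br_swap_mem_Bsub {i j : Fin k} (hij : i ≠ j) :
    br a + br (a ∘ swap i j) ∈ Bsub n :=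
  Submodule.subset_span (.inr ⟨k, a, i, j, hij, rfl⟩)

end Bsub

theorem sum_mem_B_of_sorted_general (n : ℕ) (k : ℕ) (hk : 0 < k)
    (a : Fin k → ℕ) (ha : Monotone a) (r : ℕ) (h : n < a ⟨0, hk⟩ + k + r) :
    (∑ c ∈ Finset.Nat.antidiagonalTuple k r, ∑ π : Equiv.Perm (Fin k),
      br fun i => a i + c (π i)) ∈ Bsub n := by
  obtain ⟨m, rfl⟩ : ∃ m, k = m + 1 := ⟨k - 1, by omega⟩
  let f : (Fin (m + 1) → ℕ) → W ⧸ Bsub n := fun b => (Bsub n).mkQ (br b)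
  have hf : ∀ {w}, w ∈ Bsub n → (Bsub n).mkQ w = 0 := (Submodule.Quotient.mk_eq_zero _).2
  have hswap : ∀ b (i : Fin m), f b + f (b ∘ swap i.castSucc i.succ) = 0 := fun b i => by
    simpa only [map_add] using hf (br_add_br_swap_mem_Bsub Fin.castSucc_lt_succ.ne)
  have hrep : ∀ b (i : Fin m), b i.castSucc = b i.succ → f b = 0 := fun b i hb =>
    hf (br_mem_Bsub_of_eq Fin.castSucc_lt_succ.ne hb)
  have hbig : ∀ b, n ≤ b (Fin.last m) → f b = 0 := fun b hb => hf (br_mem_Bsub_of_le hb)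
  rw [← Submodule.ker_mkQ (Bsub n), LinearMap.mem_ker]
  simp only [map_sum]
  rw [sum_comm]
  refine sum_eq_zero fun π _ => ?_
  exact (sum_antidiagonalTuple_comp_perm π fun c => f (a + c)).trans
    (sum_antidiagonalTuple_eq_zero f hswap hrep hbig ha (by rw [Fin.zero_eta] at h; omega))

/-- **Lemma 3**: for `k ≥ 1`, `a_1 ≤ a_2 ≤ ⋯ ≤ a_k` and `r ≥ 0` with `a_1 + k + r > n`,
the sum `Σ_{c_1+⋯+c_k=r} Σ_{π ∈ S_k} [a_1 + c_{π(1)},…,a_k + c_{π(k)}]` belongs to `B`. -/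
theorem sum_mem_B_of_sorted (n : ℕ) (hn : 0 < n) (k : ℕ) (hk : 0 < k)
    (a : Fin k → ℕ) (ha : Monotone a) (r : ℕ) (h : n < a ⟨0, hk⟩ + k + r) :
    (∑ c ∈ Finset.Nat.antidiagonalTuple k r, ∑ π : Equiv.Perm (Fin k),
      br fun i => a i + c (π i)) ∈ Bsub n :=
  sum_mem_B_of_sorted_general n k hk a ha r h
end

section
/- Fix a positive integer n. Let k be a positive integer, (a_1,…,a_k) ∈ ℕ₀^k arbitrary, and r a nonnegative integer with r + k > n. Then Σ_{c_1+⋯+c_k = r} Σ_{π ∈ S_k} [a_1 + c_{π(1)}, …, a_k + c_{π(k)}] ∈ B, where the outer sum is over all k-tuples (c_1,…,c_k) of nonnegative integers summing to r. -/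
lemma exists_pair {n k r : ℕ} (hk : 0 < k) (h : n < r + k) (a b : Fin k → ℕ)
    (hinj : Function.Injective b) (hlt : ∀ i, b i < n) (hab : ∀ i, a i ≤ b i)
    (hsum : ∑ i, b i = (∑ i, a i) + r) :
    ∃ p : Fin k × Fin k, p.1 ≠ p.2 ∧
      (Finset.image b Finset.univ).filter (fun v => a p.1 ≤ v)
        = (Finset.image b Finset.univ).filter (fun v => a p.2 ≤ v) := by
  classical
  by_contra hcon
  push_neg at hcon
  set T := Finset.image b Finset.univ with hT
  set s : Fin k → Finset ℕ := fun i => T.filter (fun v => a i ≤ v) with hs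
  have hsinj : Function.Injective s := by
    intro i j hij
    by_contra hne
    exact hcon (i, j) hne hij
  have hTcard : T.card = k := by
    rw [hT, Finset.card_image_of_injective _ hinj, Finset.card_univ, Fintype.card_fin]
  have hbT : ∀ i, b i ∈ T := fun i => Finset.mem_image_of_mem b (Finset.mem_univ i)
  have hbs : ∀ i, b i ∈ s i := fun i => Finset.mem_filter.2 ⟨hbT i, hab i⟩
  have hcard_le : ∀ i, (s i).card ≤ k := fun i =>
    hTcard ▸ Finset.card_le_card (Finset.filter_subset _ _)
  have hcard_pos : ∀ i, 1 ≤ (s i).card := fun i => Finset.card_pos.2 ⟨b i, hbs i⟩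
  have hnest : ∀ i j, a i ≤ a j → s j ⊆ s i := by
    intro i j hij u hu
    rcases Finset.mem_filter.1 hu with ⟨h1, h2⟩
    exact Finset.mem_filter.2 ⟨h1, le_trans hij h2⟩
  have hcardinj : Function.Injective (fun i => (s i).card) := by
    intro i j hij
    simp only at hij
    rcases le_total (a i) (a j) with hle | hle
    · exact hsinj (Finset.eq_of_subset_of_card_le (hnest i j hle) (le_of_eq hij)).symm
    · exact hsinj (Finset.eq_of_subset_of_card_le (hnest j i hle) (le_of_eq hij.symm))
  have himg : Finset.image (fun i => (s i).card) Finset.univ = Finset.Icc 1 k := by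
    apply Finset.eq_of_subset_of_card_le
    · intro m hm
      rcases Finset.mem_image.1 hm with ⟨i, -, rfl⟩
      exact Finset.mem_Icc.2 ⟨hcard_pos i, hcard_le i⟩
    · rw [Nat.card_Icc, Finset.card_image_of_injective _ hcardinj, Finset.card_univ,
        Fintype.card_fin]
      omega
  have hkmem : k ∈ Finset.image (fun i => (s i).card) Finset.univ := by
    rw [himg]; exact Finset.mem_Icc.2 ⟨hk, le_rfl⟩
  obtain ⟨i₀, -, hi₀⟩ := Finset.mem_image.1 hkmem
  set Ω := Finset.univ.erase i₀ with hΩ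
  have hΩcard : Ω.card = k - 1 := by
    rw [hΩ, Finset.card_erase_of_mem (Finset.mem_univ _), Finset.card_univ, Fintype.card_fin]
  have hslt : ∀ i ∈ Ω, (s i).card < k := by
    intro i hi
    rcases lt_or_eq_of_le (hcard_le i) with h' | h'
    · exact h'
    · exact absurd (hcardinj (h'.trans hi₀.symm)) (Finset.ne_of_mem_erase hi)
  have hne : ∀ i ∈ Ω, (T \ s i).Nonempty := by
    intro i hi
    rw [← Finset.card_pos, Finset.card_sdiff_of_subset (show s i ⊆ T from Finset.filter_subset _ _)]
    have := hslt i hi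
    omega
  set v : Fin k → ℕ := fun i => if h : (T \ s i).Nonempty then (T \ s i).max' h else 0 with hv
  have hvmem : ∀ i ∈ Ω, v i ∈ T \ s i := by
    intro i hi
    simp only [hv, dif_pos (hne i hi)]
    exact Finset.max'_mem _ _
  have hvle : ∀ i ∈ Ω, ∀ u ∈ T \ s i, u ≤ v i := by
    intro i hi u hu
    simp only [hv, dif_pos (hne i hi)]
    exact Finset.le_max' _ _ hu
  have hvlt : ∀ i ∈ Ω, v i < a i := by
    intro i hi
    have h1 := Finset.mem_sdiff.1 (hvmem i hi)
    by_contra hle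
    exact h1.2 (Finset.mem_filter.2 ⟨h1.1, not_lt.1 hle⟩)
  have hfilter : ∀ i ∈ Ω, T.filter (fun u => v i < u) = s i := by
    intro i hi
    ext u
    simp only [Finset.mem_filter, hs]
    constructor
    · rintro ⟨huT, hvu⟩
      refine ⟨huT, ?_⟩
      by_contra hua
      have hu' : u ∈ T \ s i :=
        Finset.mem_sdiff.2 ⟨huT, fun hmem => hua ((Finset.mem_filter.1 hmem).2)⟩
      have := hvle i hi u hu'
      omega
    · rintro ⟨huT, hau⟩
      exact ⟨huT, lt_of_lt_of_le (hvlt i hi) hau⟩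
  have hvinj : ∀ i ∈ Ω, ∀ j ∈ Ω, v i = v j → i = j := by
    intro i hi j hj hij
    apply hsinj
    rw [← hfilter i hi, ← hfilter j hj, hij]
  have hTne : T.Nonempty := Finset.card_pos.1 (by omega)
  set M := T.max' hTne with hM
  have hMs : ∀ i, M ∈ s i := fun i =>
    Finset.mem_filter.2 ⟨Finset.max'_mem _ _, le_trans (hab i) (Finset.le_max' _ _ (hbT i))⟩
  have hvM : ∀ i ∈ Ω, v i ∈ T.erase M := by
    intro i hi
    have h1 := Finset.mem_sdiff.1 (hvmem i hi)
    exact Finset.mem_erase.2 ⟨fun hEq => h1.2 (hEq ▸ hMs i), h1.1⟩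
  have himgv : Ω.image v = T.erase M := by
    apply Finset.eq_of_subset_of_card_le
    · intro u hu
      rcases Finset.mem_image.1 hu with ⟨i, hi, rfl⟩
      exact hvM i hi
    · rw [Finset.card_erase_of_mem (Finset.max'_mem _ _), Finset.card_image_of_injOn hvinj,
        hTcard, hΩcard]
  have hsum_T : ∑ u ∈ T, u = ∑ i, b i := by
    rw [hT, Finset.sum_image (fun i _ j _ hEq => hinj hEq)]
  have hsplit : M + ∑ u ∈ T.erase M, u = ∑ u ∈ T, u :=
    Finset.add_sum_erase T id (Finset.max'_mem _ _)
  have hsum_v : ∑ u ∈ T.erase M, u = ∑ i ∈ Ω, v i := by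
    rw [← himgv, Finset.sum_image hvinj]
  have hMn : M < n := by
    rcases Finset.mem_image.1 (Finset.max'_mem T hTne) with ⟨i, -, hEq⟩
    show T.max' hTne < n
    exact hEq ▸ hlt i
  have hbound : ∑ i ∈ Ω, (v i + 1) ≤ ∑ i ∈ Ω, a i :=
    Finset.sum_le_sum (fun i hi => hvlt i hi)
  have haΩ : ∑ i ∈ Ω, a i ≤ ∑ i, a i :=
    Finset.sum_le_sum_of_subset (Finset.subset_univ _)
  have hvsum : ∑ i ∈ Ω, (v i + 1) = (∑ i ∈ Ω, v i) + (k - 1) := by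
    rw [Finset.sum_add_distrib, Finset.sum_const, smul_eq_mul, mul_one, hΩcard]
  omega

noncomputable def pickP {k : ℕ} (a : Fin k → ℕ) (T : Finset ℕ) (p₀ : Fin k × Fin k) :
    Fin k × Fin k :=
  if h : ∃ p : Fin k × Fin k, p.1 ≠ p.2 ∧
      T.filter (fun v => a p.1 ≤ v) = T.filter (fun v => a p.2 ≤ v) then h.choose else p₀

lemma pickP_spec {k : ℕ} (a : Fin k → ℕ) (T : Finset ℕ) (p₀ : Fin k × Fin k)
    (hex : ∃ p : Fin k × Fin k, p.1 ≠ p.2 ∧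
      T.filter (fun v => a p.1 ≤ v) = T.filter (fun v => a p.2 ≤ v)) :
    (pickP a T p₀).1 ≠ (pickP a T p₀).2 ∧
      T.filter (fun v => a (pickP a T p₀).1 ≤ v)
        = T.filter (fun v => a (pickP a T p₀).2 ≤ v) := by
  rw [pickP, dif_pos hex]
  exact hex.choose_spec

/-- the involution on tuples -/
noncomputable def gmap {k : ℕ} (a : Fin k → ℕ) (p₀ : Fin k × Fin k) (c : Fin k → ℕ) :
    Fin k → ℕ :=
  fun j =>
    (a (Equiv.swap (pickP a (Finset.image (fun i => a i + c i) Finset.univ) p₀).1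
          (pickP a (Finset.image (fun i => a i + c i) Finset.univ) p₀).2 j)
      + c (Equiv.swap (pickP a (Finset.image (fun i => a i + c i) Finset.univ) p₀).1
          (pickP a (Finset.image (fun i => a i + c i) Finset.univ) p₀).2 j)) - a j

lemma gmap_spec {n k r : ℕ} (hk : 0 < k) (h : n < r + k) (a : Fin k → ℕ)
    (p₀ : Fin k × Fin k) (c : Fin k → ℕ) (hcr : ∑ i, c i = r)
    (hinj : Function.Injective (fun i => a i + c i)) (hlt : ∀ i, a i + c i < n) :
    ((fun i => a i + gmap a p₀ c i)
        = (fun i => a i + c i)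
          ∘ (Equiv.swap (pickP a (Finset.image (fun i => a i + c i) Finset.univ) p₀).1
              (pickP a (Finset.image (fun i => a i + c i) Finset.univ) p₀).2))
      ∧ (pickP a (Finset.image (fun i => a i + c i) Finset.univ) p₀).1
          ≠ (pickP a (Finset.image (fun i => a i + c i) Finset.univ) p₀).2 := by
  have hex := exists_pair hk h a (fun i => a i + c i) hinj hlt
    (fun i => Nat.le_add_right _ _) (by rw [Finset.sum_add_distrib, hcr])
  obtain ⟨hp1, hp2⟩ := pickP_spec a _ p₀ hex
  set P := pickP a (Finset.image (fun i => a i + c i) Finset.univ) p₀ with hP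
  have hm2 : a P.1 ≤ a P.2 + c P.2 := by
    have hmem : a P.2 + c P.2 ∈ (Finset.image (fun i => a i + c i) Finset.univ).filter
        (fun v => a P.2 ≤ v) :=
      Finset.mem_filter.2 ⟨Finset.mem_image_of_mem _ (Finset.mem_univ P.2),
        Nat.le_add_right _ _⟩
    rw [← hp2] at hmem
    exact (Finset.mem_filter.1 hmem).2
  have hm1 : a P.2 ≤ a P.1 + c P.1 := by
    have hmem : a P.1 + c P.1 ∈ (Finset.image (fun i => a i + c i) Finset.univ).filter
        (fun v => a P.1 ≤ v) :=
      Finset.mem_filter.2 ⟨Finset.mem_image_of_mem _ (Finset.mem_univ P.1),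
        Nat.le_add_right _ _⟩
    rw [hp2] at hmem
    exact (Finset.mem_filter.1 hmem).2
  refine ⟨funext fun j => ?_, hp1⟩
  show a j + ((a (Equiv.swap P.1 P.2 j) + c (Equiv.swap P.1 P.2 j)) - a j)
      = a (Equiv.swap P.1 P.2 j) + c (Equiv.swap P.1 P.2 j)
  apply Nat.add_sub_cancel'
  by_cases h1 : j = P.1
  · subst h1
    rw [Equiv.swap_apply_left]
    exact hm2
  by_cases h2 : j = P.2
  · subst h2
    rw [Equiv.swap_apply_right]
    exact hm1
  · rw [Equiv.swap_apply_of_ne_of_ne h1 h2]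
    exact Nat.le_add_right _ _

lemma br_mem_Bsub {n k : ℕ} (hk : 0 < k) (b : Fin k → ℕ)
    (hb : (∃ i, n ≤ b i) ∨ ∃ i j : Fin k, i ≠ j ∧ b i = b j) : br b ∈ Bsub n :=
  Submodule.subset_span (Or.inl ⟨k, b, hk, hb, rfl⟩)

lemma br_swap_mem_Bsub {n k : ℕ} (b : Fin k → ℕ) {i j : Fin k} (hij : i ≠ j) :
    br b + br (b ∘ Equiv.swap i j) ∈ Bsub n :=
  Submodule.subset_span (Or.inr ⟨k, b, i, j, hij, rfl⟩)

lemma gmap_props {n k r : ℕ} (hk : 0 < k) (h : n < r + k) (a : Fin k → ℕ)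
    (p₀ : Fin k × Fin k) (c : Fin k → ℕ) (hcr : ∑ i, c i = r)
    (hinj : Function.Injective (fun i => a i + c i)) (hlt : ∀ i, a i + c i < n) :
    (∑ i, gmap a p₀ c i = r)
      ∧ Function.Injective (fun i => a i + gmap a p₀ c i)
      ∧ (∀ i, a i + gmap a p₀ c i < n)
      ∧ gmap a p₀ c ≠ c
      ∧ br (fun i => a i + c i) + br (fun i => a i + gmap a p₀ c i) ∈ Bsub n := by
  obtain ⟨hfun, hp1⟩ := gmap_spec hk h a p₀ c hcr hinj hlt
  set P := pickP a (Finset.image (fun i => a i + c i) Finset.univ) p₀ with hP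
  have hsum : ∑ i, gmap a p₀ c i = r := by
    have h1 : ∑ i, (a i + gmap a p₀ c i) = ∑ i, (a i + c i) := by
      rw [hfun]
      exact Equiv.sum_comp (Equiv.swap P.1 P.2) (fun i => a i + c i)
    rw [Finset.sum_add_distrib, Finset.sum_add_distrib, hcr] at h1
    exact Nat.add_left_cancel h1
  refine ⟨hsum, ?_, ?_, ?_, ?_⟩
  · rw [hfun]
    exact hinj.comp (Equiv.injective _)
  · intro i
    rw [congrFun hfun i]
    exact hlt _
  · intro hEq
    apply hp1
    apply hinj
    have h1 := congrFun hfun P.1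
    rw [hEq] at h1
    simp only [Function.comp_apply, Equiv.swap_apply_left] at h1
    exact h1
  · rw [hfun]
    exact br_swap_mem_Bsub _ hp1

lemma gmap_image {n k r : ℕ} (hk : 0 < k) (h : n < r + k) (a : Fin k → ℕ)
    (p₀ : Fin k × Fin k) (c : Fin k → ℕ) (hcr : ∑ i, c i = r)
    (hinj : Function.Injective (fun i => a i + c i)) (hlt : ∀ i, a i + c i < n) :
    Finset.image (fun i => a i + gmap a p₀ c i) Finset.univ
      = Finset.image (fun i => a i + c i) Finset.univ := by
  obtain ⟨hfun, -⟩ := gmap_spec hk h a p₀ c hcr hinj hlt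
  rw [hfun, ← Finset.image_image, Finset.image_univ_equiv]

lemma gmap_gmap {n k r : ℕ} (hk : 0 < k) (h : n < r + k) (a : Fin k → ℕ)
    (p₀ : Fin k × Fin k) (c : Fin k → ℕ) (hcr : ∑ i, c i = r)
    (hinj : Function.Injective (fun i => a i + c i)) (hlt : ∀ i, a i + c i < n) :
    gmap a p₀ (gmap a p₀ c) = c := by
  obtain ⟨hfun, hp1⟩ := gmap_spec hk h a p₀ c hcr hinj hlt
  have himg := gmap_image hk h a p₀ c hcr hinj hlt
  funext j
  show (a (Equiv.swap
        (pickP a (Finset.image (fun i => a i + gmap a p₀ c i) Finset.univ) p₀).1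
        (pickP a (Finset.image (fun i => a i + gmap a p₀ c i) Finset.univ) p₀).2 j)
      + gmap a p₀ c (Equiv.swap
        (pickP a (Finset.image (fun i => a i + gmap a p₀ c i) Finset.univ) p₀).1
        (pickP a (Finset.image (fun i => a i + gmap a p₀ c i) Finset.univ) p₀).2 j))
      - a j = c j
  rw [himg]
  set P := pickP a (Finset.image (fun i => a i + c i) Finset.univ) p₀ with hP
  have h1 := congrFun hfun (Equiv.swap P.1 P.2 j)
  simp only [Function.comp_apply, Equiv.swap_apply_self] at h1
  rw [h1, Nat.add_sub_cancel_left]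

lemma key_sum_mem {n k r : ℕ} (hk : 0 < k) (h : n < r + k) (a : Fin k → ℕ) :
    (∑ c ∈ Finset.Nat.antidiagonalTuple k r, br fun i => a i + c i) ∈ Bsub n := by
  classical
  set q := (Bsub n).mkQ with hq
  have hqz : ∀ w : W, w ∈ Bsub n → q w = 0 := by
    intro w hw
    rw [hq, Submodule.mkQ_apply, Submodule.Quotient.mk_eq_zero]
    exact hw
  suffices hq0 : ∑ c ∈ Finset.Nat.antidiagonalTuple k r, q (br fun i => a i + c i) = 0 by
    rw [← map_sum] at hq0
    rwa [hq, Submodule.mkQ_apply, Submodule.Quotient.mk_eq_zero] at hq0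
  set Good : (Fin k → ℕ) → Prop := fun c =>
    Function.Injective (fun i => a i + c i) ∧ ∀ i, a i + c i < n with hGood
  rw [← Finset.sum_filter_add_sum_filter_not (Finset.Nat.antidiagonalTuple k r) Good]
  have hbad : ∑ c ∈ (Finset.Nat.antidiagonalTuple k r).filter (fun c => ¬ Good c),
      q (br fun i => a i + c i) = 0 := by
    apply Finset.sum_eq_zero
    intro c hc
    rcases Finset.mem_filter.1 hc with ⟨-, hng⟩
    apply hqz
    apply br_mem_Bsub hk
    rw [hGood] at hng
    by_cases hbig : ∀ i, a i + c i < n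
    · have hninj : ¬ Function.Injective (fun i => a i + c i) := fun hI => hng ⟨hI, hbig⟩
      rcases Function.not_injective_iff.1 hninj with ⟨i, j, hEq, hNe⟩
      exact Or.inr ⟨i, j, hNe, hEq⟩
    · push_neg at hbig
      rcases hbig with ⟨i, hi⟩
      exact Or.inl ⟨i, hi⟩
  rw [hbad, add_zero]
  set p₀ : Fin k × Fin k := (⟨0, hk⟩, ⟨0, hk⟩) with hp₀
  have hmemfacts : ∀ c ∈ (Finset.Nat.antidiagonalTuple k r).filter Good,
      (∑ i, c i = r) ∧ Function.Injective (fun i => a i + c i) ∧ ∀ i, a i + c i < n := by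
    intro c hc
    rcases Finset.mem_filter.1 hc with ⟨hcA, hGc⟩
    rw [hGood] at hGc
    exact ⟨Finset.Nat.mem_antidiagonalTuple.1 hcA, hGc.1, hGc.2⟩
  apply Finset.sum_involution (fun c _ => gmap a p₀ c)
  · -- hg₁ : f c + f (g c) = 0
    intro c hc
    obtain ⟨hcr, hinj, hlt⟩ := hmemfacts c hc
    obtain ⟨-, -, -, -, hmem⟩ := gmap_props hk h a p₀ c hcr hinj hlt
    rw [← map_add]
    exact hqz _ hmem
  · -- hg₃ : nontrivial
    intro c hc _
    obtain ⟨hcr, hinj, hlt⟩ := hmemfacts c hc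
    obtain ⟨-, -, -, hne, -⟩ := gmap_props hk h a p₀ c hcr hinj hlt
    exact hne
  · -- g_mem
    intro c hc
    obtain ⟨hcr, hinj, hlt⟩ := hmemfacts c hc
    obtain ⟨hsum', hinj', hlt', -, -⟩ := gmap_props hk h a p₀ c hcr hinj hlt
    refine Finset.mem_filter.2 ⟨Finset.Nat.mem_antidiagonalTuple.2 hsum', ?_⟩
    rw [hGood]
    exact ⟨hinj', hlt'⟩
  · -- hg₄
    intro c hc
    obtain ⟨hcr, hinj, hlt⟩ := hmemfacts c hc
    exact gmap_gmap hk h a p₀ c hcr hinj hlt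


/-- **Corollary of Lemma 3**: for `k ≥ 1`, an arbitrary tuple `(a_1,…,a_k) ∈ ℕ₀^k` and
`r ≥ 0` with `r + k > n`, the sum
`Σ_{c_1+⋯+c_k=r} Σ_{π ∈ S_k} [a_1 + c_{π(1)},…,a_k + c_{π(k)}]` belongs to `B`. -/
theorem sum_mem_B (n : ℕ) (hn : 0 < n) (k : ℕ) (hk : 0 < k)
    (a : Fin k → ℕ) (r : ℕ) (h : n < r + k) :
    (∑ c ∈ Finset.Nat.antidiagonalTuple k r, ∑ π : Equiv.Perm (Fin k),
      br fun i => a i + c (π i)) ∈ Bsub n := by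
  classical
  rw [Finset.sum_comm]
  apply Submodule.sum_mem
  intro π _
  have hre : (∑ c ∈ Finset.Nat.antidiagonalTuple k r, br fun i => a i + c (π i))
      = ∑ c ∈ Finset.Nat.antidiagonalTuple k r, br fun i => a i + c i := by
    apply Finset.sum_nbij' (fun c => c ∘ π) (fun c => c ∘ π.symm)
    · intro c hc
      rw [Finset.Nat.mem_antidiagonalTuple] at hc ⊢
      rw [← hc]
      exact Equiv.sum_comp π c
    · intro c hc
      rw [Finset.Nat.mem_antidiagonalTuple] at hc ⊢
      rw [← hc]
      exact Equiv.sum_comp π.symm c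
    · intro c hc
      funext i
      simp
    · intro c hc
      funext i
      simp
    · intro c hc
      rfl
  rw [hre]
  exact key_sum_mem hk h a
end
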